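/- arXiv:0709.1127 — 7 statements merged into one kernel-verified Lean document; each statement's English description precedes it below -/
import Mathlib

section
/- If N ⊂ ℝ is a discrete set of nonnegative real numbers, then the set ⋃_{r=1}^∞ r(N) of all sums of r elements of N (over all r ≥ 1) is also a discrete set of nonnegative numbers. -/
/-!
A set of reals is discrete iff it meets every compact interval in a finite set. If `N ⊆ [0, ∞)`
is discrete, then `N ∩ [0, M]` is finite, so its positive elements are bounded below by some
`ε > 0`. A sum of elements of `N` that is at most `M` has all its summands in `N ∩ [0, M]` and at
most `M / ε` of them positive; dropping the zero summands, it is the sum of a multiset of elements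
of `N ∩ [0, M]` of cardinality at most `⌈M / ε⌉`, and there are only finitely many such sums.
-/

open Filter

/-- A subset of ℝ is discrete iff it has no accumulation points in ℝ. -/
def DiscreteSet (A : Set ℝ) : Prop := ∀ x : ℝ, ¬ AccPt x (Filter.principal A)

/-- `rSum N r` is the set `r(N)` of all sums of `r` elements of `N`. -/
def rSum (N : Set ℝ) (r : ℕ) : Set ℝ :=
  {x | ∃ f : Fin r → ℝ, (∀ i, f i ∈ N) ∧ x = ∑ i, f i}

open Set

theorem discreteSet_iff_inter_Icc_finite {A : Set ℝ} :
    DiscreteSet A ↔ ∀ a b : ℝ, (A ∩ Icc a b).Finite := by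
  constructor
  · intro hA a b
    by_contra hinf
    obtain ⟨x, -, hx⟩ := Set.Infinite.exists_accPt_of_subset_isCompact hinf isCompact_Icc
      inter_subset_right
    exact hA x (hx.mono (principal_mono.2 inter_subset_left))
  · intro hA x hx
    have hx' := hx.nhds_inter (Icc_mem_nhds (sub_one_lt x) (lt_add_one x))
    exact Set.Infinite.of_accPt hx' (inter_comm A _ ▸ hA (x - 1) (x + 1))

theorem rSum_subset_Ici {N : Set ℝ} (hN0 : N ⊆ Ici 0) (r : ℕ) : rSum N r ⊆ Ici 0 := by
  rintro _ ⟨f, hf, rfl⟩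
  exact Finset.sum_nonneg fun i _ => mem_Ici.1 (hN0 (hf i))

theorem Set.Finite.exists_pos_le_of_pos {F : Set ℝ} (hF : F.Finite) :
    ∃ ε > 0, ∀ a ∈ F, 0 < a → ε ≤ a := by
  classical
  let P := insert 1 (hF.toFinset.filter (0 < ·))
  refine ⟨P.min' (Finset.insert_nonempty _ _), ?_, fun a ha hapos => P.min'_le a ?_⟩
  · refine (Finset.lt_min'_iff _ _).2 fun y hy => ?_
    rcases Finset.mem_insert.1 hy with rfl | hy
    · exact one_pos
    · exact (Finset.mem_filter.1 hy).2
  · exact Finset.mem_insert_of_mem (Finset.mem_filter.2 ⟨hF.mem_toFinset.2 ha, hapos⟩)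

theorem Set.Finite.setOf_multiset_sum_card_le {α : Type*} [AddCommMonoid α] {F : Set α}
    (hF : F.Finite) (k : ℕ) :
    {x | ∃ s : Multiset α, Multiset.card s ≤ k ∧ (∀ a ∈ s, a ∈ F) ∧ s.sum = x}.Finite := by
  classical
  refine ((finite_Iic k).biUnion fun j _ =>
    (hF.toFinset.sym j).finite_toSet.image fun s : Sym α j => (s : Multiset α).sum).subset ?_
  rintro _ ⟨s, hsk, hsF, rfl⟩
  refine mem_biUnion (mem_Iic.2 hsk) ⟨⟨s, rfl⟩, ?_, rfl⟩
  exact Finset.mem_sym_iff.2 fun a ha => hF.mem_toFinset.2 (hsF a ha)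

theorem finite_iUnion_rSum_inter_Iic {N : Set ℝ} (hN0 : N ⊆ Ici 0) {M : ℝ}
    (hNM : (N ∩ Iic M).Finite) : ((⋃ r, rSum N r) ∩ Iic M).Finite := by
  obtain ⟨ε, hε, hεN⟩ := hNM.exists_pos_le_of_pos
  refine (hNM.setOf_multiset_sum_card_le ⌈M / ε⌉₊).subset ?_
  rintro _ ⟨hx, hxM⟩
  obtain ⟨r, f, hf, rfl⟩ := mem_iUnion.1 hx
  have hf0 i : 0 ≤ f i := hN0 (hf i)
  have hfM i : f i ≤ M := (Finset.single_le_sum (fun j _ => hf0 j) (Finset.mem_univ i)).trans hxM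
  let P := Finset.univ.filter fun i => 0 < f i
  have hsum : ∑ i ∈ P, f i = ∑ i, f i :=
    Finset.sum_filter_of_ne fun i _ h => (hf0 i).lt_of_ne' h
  refine ⟨P.val.map f, ?_, ?_, hsum⟩
  · have hP : P.card • ε ≤ ∑ i ∈ P, f i :=
      Finset.card_nsmul_le_sum P f ε fun i hi =>
        hεN _ ⟨hf i, hfM i⟩ (Finset.mem_filter.1 hi).2
    rw [nsmul_eq_mul, hsum] at hP
    rw [Multiset.card_map, Finset.card_val]
    exact_mod_cast ((le_div_iff₀ hε).2 (hP.trans hxM)).trans (Nat.le_ceil _)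
  · simp only [Multiset.mem_map]
    rintro _ ⟨i, -, rfl⟩
    exact ⟨hf i, hfM i⟩

/-- if `N ⊆ ℝ` is a discrete set of nonnegative reals, then
`⋃_{r ≥ 1} r(N)` is also a discrete set of nonnegative reals. -/
theorem iUnion_rSum_discrete (N : Set ℝ) (hN0 : N ⊆ Set.Ici (0:ℝ))
    (hNd : DiscreteSet N) :
    (⋃ r ∈ {r : ℕ | 1 ≤ r}, rSum N r) ⊆ Set.Ici (0:ℝ) ∧
      DiscreteSet (⋃ r ∈ {r : ℕ | 1 ≤ r}, rSum N r) := by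
  refine ⟨iUnion₂_subset fun r _ => rSum_subset_Ici hN0 r,
    discreteSet_iff_inter_Icc_finite.2 fun a b => ?_⟩
  have hNb : (N ∩ Iic b).Finite := (discreteSet_iff_inter_Icc_finite.1 hNd 0 b).subset
    fun x ⟨hxN, hxb⟩ => ⟨hxN, hN0 hxN, hxb⟩
  exact (finite_iUnion_rSum_inter_Iic hN0 hNb).subset
    (inter_subset_inter (iUnion₂_subset fun r _ => subset_iUnion (rSum N) r) Icc_subset_Iic_self)
end

section
/- If Z ⊂ ℝ is discrete and bounded below and N ⊂ [0,∞) is discrete, then Z + ⋃_{r=1}^∞ r(N) is discrete and bounded below. -/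
open Filter Pointwise

/-!
A subset of ℝ that is bounded below is discrete exactly when it meets every half-line
`(-∞, M]` in a finite set, and this property survives Minkowski sums. Every element of
`⋃ r, r(N)` is a sum of nonzero elements of `N`. Discreteness gives a gap `(0, ε)` in `N`, so a
sum not exceeding `B` has at most `B / ε` terms, all taken from the finite set `N ∩ [0, B]`;
there are only finitely many such sums.
-/

open Set

theorem Multiset.le_nsmul_val_of_forall_mem_of_card_le {α : Type*} [DecidableEq α]
    {s : Multiset α} {t : Finset α} {n : ℕ} (hst : ∀ a ∈ s, a ∈ t) (hn : card s ≤ n) :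
    s ≤ n • t.val := by
  rw [Multiset.le_iff_count]
  intro a
  by_cases ha : a ∈ s
  · rw [Multiset.count_nsmul, Multiset.count_eq_one_of_mem t.nodup (hst a ha), mul_one]
    exact (Multiset.count_le_card a s).trans hn
  · simp [Multiset.count_eq_zero_of_notMem ha]

theorem finite_add_inter_Iic {α : Type*} [AddCommGroup α] [PartialOrder α] [IsOrderedAddMonoid α]
    {A B : Set α} (hAb : BddBelow A) (hBb : BddBelow B)
    (hA : ∀ M, (A ∩ Iic M).Finite) (hB : ∀ M, (B ∩ Iic M).Finite) (M : α) :
    ((A + B) ∩ Iic M).Finite := by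
  obtain ⟨a, ha⟩ := hAb
  obtain ⟨b, hb⟩ := hBb
  refine ((hA (M - b)).add (hB (M - a))).subset ?_
  rintro _ ⟨⟨x, hx, y, hy, rfl⟩, hxy⟩
  refine ⟨x, ⟨hx, ?_⟩, y, ⟨hy, ?_⟩, rfl⟩
  · exact le_sub_iff_add_le.mpr ((add_le_add_right (hb hy) x).trans hxy)
  · exact le_sub_iff_add_le'.mpr ((add_le_add_left (ha hx) y).trans hxy)

namespace DiscreteSet

variable {A : Set ℝ}

theorem finite_inter_Icc (hA : DiscreteSet A) (a b : ℝ) : (A ∩ Icc a b).Finite := by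
  by_contra h
  obtain ⟨x, -, hx⟩ := Set.Infinite.exists_accPt_of_subset_isCompact h isCompact_Icc
    inter_subset_right
  exact hA x (hx.mono (principal_mono.mpr inter_subset_left))

theorem finite_inter_Iic (hA : DiscreteSet A) (hAb : BddBelow A) (M : ℝ) :
    (A ∩ Iic M).Finite := by
  obtain ⟨c, hc⟩ := hAb
  exact (hA.finite_inter_Icc c M).subset fun x hx => ⟨hx.1, hc hx.1, hx.2⟩

theorem exists_pos_forall_le_dist (hA : DiscreteSet A) (x : ℝ) :
    ∃ ε > 0, ∀ y ∈ A, y ≠ x → ε ≤ dist y x := by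
  have h := hA x
  rw [accPt_iff_frequently, not_frequently] at h
  obtain ⟨ε, hε, hball⟩ := Metric.eventually_nhds_iff.mp h
  exact ⟨ε, hε, fun y hy hyx => le_of_not_gt fun hlt => hball hlt ⟨hyx, hy⟩⟩

end DiscreteSet

theorem discreteSet_of_forall_finite_inter_Iic {A : Set ℝ} (h : ∀ M, (A ∩ Iic M).Finite) :
    DiscreteSet A := fun x hx =>
  Set.Infinite.of_accPt (hx.nhds_inter (Iic_mem_nhds (lt_add_one x))) (inter_comm A _ ▸ h (x + 1))

theorem rSum_subset_addSubmonoidClosure (N : Set ℝ) (r : ℕ) :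
    rSum N r ⊆ AddSubmonoid.closure N := by
  rintro _ ⟨f, hf, rfl⟩
  exact sum_mem fun i _ => AddSubmonoid.subset_closure (hf i)

theorem addSubmonoidClosure_subset_Ici_zero {N : Set ℝ} (hN0 : N ⊆ Ici 0) :
    (AddSubmonoid.closure N : Set ℝ) ⊆ Ici 0 := fun _ hx =>
  AddSubmonoid.closure_induction (fun _ hy => hN0 hy) self_mem_Ici
    (fun _ _ _ _ => add_nonneg (α := ℝ)) hx

theorem finite_addSubmonoidClosure_inter_Iic {N : Set ℝ} (hN0 : N ⊆ Ici 0)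
    (hNd : DiscreteSet N) (B : ℝ) :
    ((AddSubmonoid.closure N : Set ℝ) ∩ Iic B).Finite := by
  classical
  obtain ⟨ε, hε, hgap⟩ := hNd.exists_pos_forall_le_dist 0
  set F := (hNd.finite_inter_Icc 0 B).toFinset
  refine ((Set.finite_Iic (⌊B / ε⌋₊ • F.val)).image Multiset.sum).subset ?_
  rintro x ⟨hx, hxB⟩
  -- `0` is redundant as a generator, so `x` is a sum of nonzero elements of `N`
  rw [← AddSubmonoid.closure_insert_zero, ← insert_sdiff_singleton,
    AddSubmonoid.closure_insert_zero] at hx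
  obtain ⟨s, hs, rfl⟩ := AddSubmonoid.exists_multiset_of_mem_closure hx
  have hs0 : ∀ y ∈ s, 0 ≤ y := fun y hy => hN0 (hs y hy).1
  have hsB : ∀ y ∈ s, y ∈ F := fun y hy => by
    simpa [F] using ⟨(hs y hy).1, hs0 y hy, (Multiset.single_le_sum hs0 y hy).trans hxB⟩
  have hsε : ∀ y ∈ s, ε ≤ y := fun y hy => by
    simpa [abs_of_nonneg (hs0 y hy)] using hgap y (hs y hy).1 (hs y hy).2
  have hcard : Multiset.card s ≤ ⌊B / ε⌋₊ := by
    refine Nat.le_floor ((le_div_iff₀ hε).mpr ?_)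
    simpa using (Multiset.card_nsmul_le_sum hsε).trans hxB
  exact ⟨s, Multiset.le_nsmul_val_of_forall_mem_of_card_le hsB hcard, rfl⟩

/-- if `Z ⊆ ℝ` is discrete and bounded below and `N ⊆ [0,∞)` is
discrete, then `Z + ⋃_{r ≥ 1} r(N)` is discrete and bounded below. -/
theorem add_iUnion_rSum_discrete (Z N : Set ℝ)
    (hZd : DiscreteSet Z) (hZb : BddBelow Z)
    (hN0 : N ⊆ Set.Ici (0:ℝ)) (hNd : DiscreteSet N) :
    DiscreteSet (Z + ⋃ r ∈ {r : ℕ | 1 ≤ r}, rSum N r) ∧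
      BddBelow (Z + ⋃ r ∈ {r : ℕ | 1 ≤ r}, rSum N r) := by
  set S := ⋃ r ∈ {r : ℕ | 1 ≤ r}, rSum N r
  have hS : S ⊆ AddSubmonoid.closure N :=
    iUnion₂_subset fun r _ => rSum_subset_addSubmonoidClosure N r
  have hSb : BddBelow S := ⟨0, fun x hx => addSubmonoidClosure_subset_Ici_zero hN0 (hS hx)⟩
  have hSfin : ∀ M, (S ∩ Iic M).Finite := fun M =>
    (finite_addSubmonoidClosure_inter_Iic hN0 hNd M).subset (inter_subset_inter_left _ hS)
  exact ⟨discreteSet_of_forall_finite_inter_Iic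
    (finite_add_inter_Iic hZb hSb (hZd.finite_inter_Iic hZb) hSfin), hZb.add hSb⟩
end

section
/- Let u_1,…,u_k ∈ Λ_K(G)^n with ν̄(u_i) = 0, let U be their span over Λ_K(G), and let V be a Λ_K(G)-submodule of Λ_K(G)^n containing U. Suppose φ: V → V satisfies: (i) for all v ∈ V either φ(v) = v or ν̄(φ(v)) > ν̄(v); (ii) if φ(v) ≠ v then v − φ(v) lies in the K-linear span of T^{ν̄(v)}u_1,…,T^{ν̄(v)}u_k. Then for every v ∈ V there exists u ∈ U with φ(v−u) = v−u, and either u = 0 or ν̄(u) = ν̄(v) and T^{−ν̄(u)}u lies in the span of u_1,…,u_k over Λ_K(G)_{≥0}. -/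
set_option synthInstance.maxHeartbeats 1000000
set_option maxHeartbeats 1000000
open Classical
noncomputable section

variable {K : Type*} [CommRing K]

def InNov (G : AddSubgroup ℝ) (x : HahnSeries ℝ K) : Prop :=
  x.support ⊆ G ∧ ∀ C : ℝ, {g ∈ x.support | g < C}.Finite

/-- A Novikov support set is bounded below. -/
lemma InNov.bddBelow {G : AddSubgroup ℝ} {x : HahnSeries ℝ K} (h : InNov G x) :
    BddBelow x.support := by
  rcases x.support.eq_empty_or_nonempty with he | ⟨a, ha⟩
  · simp [he]
  · have hmem : ∀ g ∈ x.support, g < a + 1 → g ∈ (h.2 (a+1)).toFinset := fun g hg hlt =>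
      (Set.Finite.mem_toFinset _).2 ⟨hg, hlt⟩
    refine ⟨((h.2 (a+1)).toFinset.min' ⟨a, hmem a ha (by linarith)⟩ : ℝ), ?_⟩
    intro g hg
    by_cases hga : g < a + 1
    · exact Finset.min'_le _ _ (hmem g hg hga)
    · have := Finset.min'_le (h.2 (a+1)).toFinset a (hmem a ha (by linarith))
      push_neg at hga; linarith

def NovikovSubring (K : Type*) [CommRing K] (G : AddSubgroup ℝ) :
    Subring (HahnSeries ℝ K) where
  carrier := {x | InNov G x}
  zero_mem' := by
    constructor <;> simp [HahnSeries.support_zero]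
  one_mem' := by
    have hsub : (1 : HahnSeries ℝ K).support ⊆ {0} := by
      rw [← HahnSeries.single_zero_one]; exact HahnSeries.support_single_subset
    constructor
    · exact fun g hg => by rw [Set.mem_singleton_iff.1 (hsub hg)]; exact G.zero_mem
    · intro C
      apply Set.Finite.subset (Set.finite_singleton (0:ℝ))
      rintro g ⟨hg, -⟩
      exact hsub hg
  add_mem' := by
    rintro x y ⟨hx1, hx2⟩ ⟨hy1, hy2⟩
    constructor
    · exact fun g hg => by
        rcases (HahnSeries.support_add_subset _ _ hg) with h | h
        exacts [hx1 h, hy1 h]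
    · intro C
      apply Set.Finite.subset ((hx2 C).union (hy2 C))
      rintro g ⟨hg, hgC⟩
      rcases HahnSeries.support_add_subset _ _ hg with h | h
      · exact Or.inl ⟨h, hgC⟩
      · exact Or.inr ⟨h, hgC⟩
  neg_mem' := by
    rintro x ⟨hx1, hx2⟩
    constructor
    · simpa [HahnSeries.support_neg] using hx1
    · simpa [HahnSeries.support_neg] using hx2
  mul_mem' := by
    rintro x y ⟨hx1, hx2⟩ ⟨hy1, hy2⟩
    rcases (InNov.bddBelow ⟨hx1, hx2⟩) with ⟨mx, hmx⟩
    rcases (InNov.bddBelow ⟨hy1, hy2⟩) with ⟨my, hmy⟩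
    constructor
    · intro g hg
      obtain ⟨i, hi, j, hj, rfl⟩ := HahnSeries.support_mul_subset hg
      exact G.add_mem (hx1 hi) (hy1 hj)
    · intro C
      apply Set.Finite.subset (((hx2 (C - my)).image2 (· + ·) (hy2 (C - mx))))
      rintro g ⟨hg, hgC⟩
      obtain ⟨i, hi, j, hj, rfl⟩ := HahnSeries.support_mul_subset hg
      have hgC' : i + j < C := hgC
      exact Set.mem_image2.2 ⟨i, ⟨hi, by have := hmy hj; linarith [hgC']⟩,
        j, ⟨hj, by have := hmx hi; linarith [hgC']⟩, rfl⟩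

/-- ν, the minimal-exponent valuation on Hahn series, with ν(0) = ∞. -/
def nuH (x : HahnSeries ℝ K) : EReal := if x = 0 then ⊤ else (x.order : EReal)

/-- ν̄ on vectors of Hahn series: the minimum of ν over the coordinates. -/
def nubarH {n : ℕ} (v : Fin n → HahnSeries ℝ K) : EReal := ⨅ i, nuH (v i)

variable {G : AddSubgroup ℝ}

/-- ν on the Novikov ring. -/
def nuS (x : NovikovSubring K G) : EReal := nuH (x : HahnSeries ℝ K)

/-- ν̄ on vectors over the Novikov ring. -/
def nubarS {n : ℕ} (v : Fin n → NovikovSubring K G) : EReal :=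
  nubarH fun i => (v i : HahnSeries ℝ K)

/-! Iterate `φ` from `v`. While the iterate `x m` is not fixed, `x m - x (m+1)` is a `K`-combination
of the `T^{ρ m} u j` with `ρ m = ν̄(x m)` strictly increasing, so `v - x M = ∑ j, b j • u j` with
`ν(b j) ≥ ν̄(v)`; if some iterate is fixed, the first one is `w`. Otherwise `ρ m → ∞`, because
every `ρ (m+1)` is an exponent of `v` or some `ρ l` plus an exponent of some `u j`, and both sets
are finite below any bound. The partial sums `b j` then converge in `Λ_K(G)`, `v = ∑ j, b j • u j`,
and `w = 0` works, as `ν̄(0) = ∞` forces `φ 0 = 0`. -/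

namespace HahnSeries

variable {Γ R : Type*} [LinearOrder Γ]

theorem coeff_eq_of_lt_orderTop_sub [AddGroup R] {x y : HahnSeries Γ R} {g : Γ}
    (h : (g : WithTop Γ) < (x - y).orderTop) : x.coeff g = y.coeff g :=
  sub_eq_zero.1 (by rw [← coeff_sub]; exact coeff_eq_zero_of_lt_orderTop h)

theorem le_orderTop_sum [AddCommMonoid R] {ι : Type*} {s : Finset ι} {f : ι → HahnSeries Γ R}
    {r : WithTop Γ} (h : ∀ i ∈ s, r ≤ (f i).orderTop) : r ≤ (∑ i ∈ s, f i).orderTop :=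
  Finset.sum_induction f (fun x => r ≤ x.orderTop)
    (fun _ _ hx hy => (le_min hx hy).trans min_orderTop_le_orderTop_add) (by simp) h

theorem eq_zero_of_forall_le_orderTop [Zero R] {x : HahnSeries Γ R} {ρ : ℕ → Γ}
    (hρ : ∀ g, ∃ m, g < ρ m) (h : ∀ m, (ρ m : WithTop Γ) ≤ x.orderTop) : x = 0 := by
  ext g
  obtain ⟨m, hm⟩ := hρ g
  exact coeff_eq_zero_of_lt_orderTop ((WithTop.coe_lt_coe.2 hm).trans_le (h m))

theorem exists_le_orderTop_sub_of_le_orderTop_sub_succ [AddCommGroup R]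
    (B : ℕ → HahnSeries Γ R) {ρ : ℕ → Γ} (hρ : Monotone ρ) (hcof : ∀ g, ∃ M, g < ρ M)
    (hB : ∀ M, (ρ M : WithTop Γ) ≤ (B (M + 1) - B M).orderTop) :
    ∃ b : HahnSeries Γ R, ∀ M, (ρ M : WithTop Γ) ≤ (b - B M).orderTop := by
  have hstab : ∀ M M', M ≤ M' → (ρ M : WithTop Γ) ≤ (B M' - B M).orderTop := by
    intro M M' hle
    induction hle with
    | refl => simp
    | @step M' hle ih =>
      rw [← sub_add_sub_cancel _ (B M')]
      exact (le_min ((WithTop.coe_le_coe.2 (hρ hle)).trans (hB M')) ih).trans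
        min_orderTop_le_orderTop_add
  have hagree : ∀ M M' g, g < ρ M → g < ρ M' → (B M').coeff g = (B M).coeff g := by
    intro M M' g hM hM'
    rcases le_total M M' with hle | hle
    · exact coeff_eq_of_lt_orderTop_sub ((WithTop.coe_lt_coe.2 hM).trans_le (hstab M M' hle))
    · exact (coeff_eq_of_lt_orderTop_sub ((WithTop.coe_lt_coe.2 hM').trans_le
        (hstab M' M hle))).symm
  choose N hN using hcof
  have hf : ∀ M g, g < ρ M → (B (N g)).coeff g = (B M).coeff g :=
    fun M g hM => hagree M (N g) g hM (hN g)
  have hpwo : (Function.support fun g => (B (N g)).coeff g).IsPWO := by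
    refine Set.partiallyWellOrderedOn_iff_exists_lt.2 fun s hs => ?_
    by_cases hup : ∃ n, 0 < n ∧ s 0 ≤ s n
    · obtain ⟨n, hn, hle⟩ := hup
      exact ⟨0, n, hn, hle⟩
    push Not at hup
    -- so the sequence stays below `ρ (N (s 0))`, where the limit agrees with `B (N (s 0))`
    have hlt : ∀ n, s n < ρ (N (s 0)) := fun n =>
      (Nat.eq_zero_or_pos n).elim (fun h => h ▸ hN _) fun h => (hup n h).trans (hN _)
    refine (B (N (s 0))).isPWO_support.exists_lt fun n => ?_
    rw [mem_support, ← hf _ _ (hlt n)]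
    exact hs n
  exact ⟨⟨_, hpwo⟩, fun M => le_orderTop_iff_forall.2 fun g hg => by
    rw [coeff_sub, sub_eq_zero]; exact hf M g (WithTop.coe_lt_coe.1 hg)⟩

end HahnSeries

theorem single_mem_novikovSubring {g : ℝ} (hg : g ∈ G) (c : K) :
    HahnSeries.single g c ∈ NovikovSubring K G := by
  have hsupp : (HahnSeries.single g c).support ⊆ {g} := HahnSeries.support_single_subset
  refine ⟨hsupp.trans (Set.singleton_subset_iff.2 hg), fun C => ?_⟩
  exact (Set.finite_singleton g).subset fun x hx => hsupp hx.1

theorem mem_novikovSubring_of_le_orderTop_sub {B : ℕ → HahnSeries ℝ K}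
    (hB : ∀ M, B M ∈ NovikovSubring K G) {ρ : ℕ → ℝ} (hcof : ∀ g, ∃ M, g < ρ M)
    {b : HahnSeries ℝ K} (hb : ∀ M, (ρ M : WithTop ℝ) ≤ (b - B M).orderTop) :
    b ∈ NovikovSubring K G := by
  have hcoeff : ∀ M g, g < ρ M → b.coeff g = (B M).coeff g := fun M g hg =>
    HahnSeries.coeff_eq_of_lt_orderTop_sub ((WithTop.coe_lt_coe.2 hg).trans_le (hb M))
  refine ⟨fun g hg => ?_, fun C => ?_⟩
  · obtain ⟨M, hM⟩ := hcof g
    exact (hB M).1 (by rw [HahnSeries.mem_support, ← hcoeff M g hM]; exact hg)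
  · obtain ⟨M, hM⟩ := hcof C
    refine ((hB M).2 C).subset fun g ⟨hg, hgC⟩ => ⟨?_, hgC⟩
    rw [HahnSeries.mem_support, ← hcoeff M g (hgC.trans hM)]
    exact hg

theorem coe_le_nuH_iff {x : HahnSeries ℝ K} {r : ℝ} :
    (r : EReal) ≤ nuH x ↔ (r : WithTop ℝ) ≤ x.orderTop := by
  by_cases hx : x = 0
  · simp [nuH, hx]
  · rw [nuH, if_neg hx, ← HahnSeries.order_eq_orderTop_of_ne_zero hx, EReal.coe_le_coe_iff,
      WithTop.coe_le_coe]

section Nubar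

variable {n : ℕ}

theorem coe_le_nubarS_iff {w : Fin n → NovikovSubring K G} {r : ℝ} :
    (r : EReal) ≤ nubarS w ↔ ∀ i, (r : WithTop ℝ) ≤ (w i : HahnSeries ℝ K).orderTop := by
  simp only [nubarS, nubarH, le_iInf_iff, coe_le_nuH_iff]

theorem nubarS_le_of_coeff_ne_zero {w : Fin n → NovikovSubring K G} {i : Fin n} {g : ℝ}
    (h : (w i : HahnSeries ℝ K).coeff g ≠ 0) : nubarS w ≤ g := by
  have hw : (w i : HahnSeries ℝ K) ≠ 0 := fun h0 => h (by simp [h0])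
  refine (iInf_le _ i).trans ?_
  rw [nuH, if_neg hw, EReal.coe_le_coe_iff]
  exact HahnSeries.order_le_of_coeff_ne_zero h

theorem nubarS_zero : nubarS (0 : Fin n → NovikovSubring K G) = ⊤ := by
  simp [nubarS, nubarH, nuH]

theorem exists_nubarS_eq_nuH {w : Fin n → NovikovSubring K G} (hw : nubarS w ≠ ⊤) :
    ∃ i, nubarS w = nuH (w i : HahnSeries ℝ K) := by
  cases isEmpty_or_nonempty (Fin n)
  · exact absurd (iInf_of_empty _) hw
  · obtain ⟨i, hi⟩ := exists_eq_ciInf_of_finite (f := fun i => nuH (w i : HahnSeries ℝ K))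
    exact ⟨i, hi.symm⟩

theorem nubarS_ne_bot (w : Fin n → NovikovSubring K G) : nubarS w ≠ ⊥ := by
  by_cases hw : nubarS w = ⊤
  · simp [hw]
  · obtain ⟨i, hi⟩ := exists_nubarS_eq_nuH hw
    rw [hi, nuH]
    split_ifs <;> simp

theorem exists_coeff_ne_zero_of_nubarS_eq {w : Fin n → NovikovSubring K G} {r : ℝ}
    (h : nubarS w = r) : ∃ i, (w i : HahnSeries ℝ K).coeff r ≠ 0 := by
  obtain ⟨i, hi⟩ := exists_nubarS_eq_nuH (h ▸ EReal.coe_ne_top r)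
  refine ⟨i, ?_⟩
  rw [h, nuH] at hi
  split_ifs at hi with hw
  · exact absurd hi (EReal.coe_ne_top r)
  · rw [EReal.coe_eq_coe_iff.1 hi]
    exact HahnSeries.coeff_order_eq_zero.not.2 hw

theorem coe_toReal_nubarS {w : Fin n → NovikovSubring K G} (hw : nubarS w ≠ ⊤) :
    nubarS w = (nubarS w).toReal :=
  (EReal.coe_toReal hw (nubarS_ne_bot w)).symm

theorem toReal_nubarS_mem (w : Fin n → NovikovSubring K G) : (nubarS w).toReal ∈ G := by
  by_cases hw : nubarS w = ⊤
  · simp [hw]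
  · obtain ⟨i, hi⟩ := exists_coeff_ne_zero_of_nubarS_eq (coe_toReal_nubarS hw)
    exact (w i).2.1 hi

theorem nubarS_sub_eq_left {x y : Fin n → NovikovSubring K G} (h : nubarS x < nubarS y) :
    nubarS (x - y) = nubarS x := by
  have hx := coe_toReal_nubarS (ne_top_of_lt h)
  set r := (nubarS x).toReal
  have hxr : ∀ i, (r : WithTop ℝ) ≤ (x i : HahnSeries ℝ K).orderTop := coe_le_nubarS_iff.1 hx.ge
  have hyr : ∀ i, (r : WithTop ℝ) ≤ (y i : HahnSeries ℝ K).orderTop :=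
    coe_le_nubarS_iff.1 (hx ▸ h.le)
  refine le_antisymm ?_ (hx ▸ coe_le_nubarS_iff.2 fun i =>
    (le_min (hxr i) (hyr i)).trans HahnSeries.min_orderTop_le_orderTop_sub)
  obtain ⟨i, hi⟩ := exists_coeff_ne_zero_of_nubarS_eq hx
  have hyi : (y i : HahnSeries ℝ K).coeff r = 0 :=
    not_not.1 fun hne => (nubarS_le_of_coeff_ne_zero hne).not_gt (hx ▸ h)
  rw [hx]
  refine nubarS_le_of_coeff_ne_zero (i := i) ?_
  simpa [hyi] using hi

end Nubar

theorem StrictMono.exists_lt_of_mem_or_sub_mem {r : ℕ → ℝ} (hr : StrictMono r) {S F : Set ℝ}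
    (hS : ∀ C, (S ∩ Set.Iio C).Finite) (hF : ∀ C, (F ∩ Set.Iio C).Finite)
    (hstep : ∀ m, r (m + 1) ∈ S ∨ ∃ l ≤ m, r (m + 1) - r l ∈ F) (C : ℝ) : ∃ m, C < r m := by
  by_contra! hC
  have hbdd : BddAbove (Set.range r) := ⟨C, Set.forall_mem_range.2 hC⟩
  set D := F ∩ Set.Ioo 0 (C - r 0 + 1)
  have hD : D.Finite := (hF (C - r 0 + 1)).subset fun s hs => ⟨hs.1, hs.2.2⟩
  obtain ⟨δ, hδ, hδD⟩ :=
    Set.exists_min_image (insert 1 D) id (hD.insert 1) (Set.insert_nonempty _ _)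
  have hδpos : 0 < δ := by
    rcases hδ with rfl | hδ
    exacts [one_pos, hδ.2.1]
  obtain ⟨m0, hm0⟩ := exists_lt_of_lt_ciSup (sub_lt_self (⨆ m, r m) hδpos)
  -- once `r` is within `δ` of its supremum, every step must start before `m0`
  set B := (S ∩ Set.Iio (C + 1)) ∪ ⋃ l ∈ Set.Iio m0, (r l + ·) '' D
  have hB : B.Finite := (hS _).union ((Set.finite_Iio m0).biUnion fun l _ => hD.image _)
  have hmem : ∀ m, r (m0 + m + 1) ∈ B := by
    intro m
    rcases hstep (m0 + m) with hS' | ⟨l, hl, hF'⟩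
    · exact Or.inl ⟨hS', (hC _).trans_lt (lt_add_one C)⟩
    · have hsD : r (m0 + m + 1) - r l ∈ D := ⟨hF', sub_pos.2 (hr (Nat.lt_succ_of_le hl)),
        by linarith [hC (m0 + m + 1), hr.monotone (Nat.zero_le l)]⟩
      refine Or.inr (Set.mem_biUnion (x := l) ?_ ⟨_, hsD, add_sub_cancel _ _⟩)
      by_contra! hl0
      have h1 : δ ≤ r (m0 + m + 1) - r l := hδD _ (Or.inr hsD)
      have h2 : r m0 ≤ r l := hr.monotone (not_lt.1 hl0)
      have h3 : r (m0 + m + 1) ≤ ⨆ m, r m := le_ciSup hbdd (m0 + m + 1)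
      linarith
  exact Set.infinite_of_injective_forall_mem (fun a b h => by simpa using hr.injective h) hmem hB

theorem sub_eq_sum_sum_smul_of_sub_succ_eq {R M ι : Type*} [Semiring R] [AddCommGroup M]
    [Module R M] [Fintype ι] {x : ℕ → M} {u : ι → M} {c : ℕ → ι → R} {N : ℕ}
    (h : ∀ m < N, x m - x (m + 1) = ∑ j, c m j • u j) :
    x 0 - x N = ∑ j, (∑ l ∈ Finset.range N, c l j) • u j := by
  rw [← Finset.sum_range_sub', Finset.sum_congr rfl fun m hm => h m (Finset.mem_range.1 hm),
    Finset.sum_comm]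
  simp only [Finset.sum_smul]

section Reduction

variable {n k : ℕ}

def hahnVec (w : Fin n → NovikovSubring K G) : Fin n → HahnSeries ℝ K := fun i => w i

def IsReductionStep (u : Fin k → Fin n → NovikovSubring K G) (y z : Fin n → NovikovSubring K G)
    (c : Fin k → K) : Prop :=
  nubarS y < nubarS z ∧
    hahnVec y - hahnVec z = ∑ j, HahnSeries.single (nubarS y).toReal (c j) • hahnVec (u j)

-- `T^{-r} d` lies in the `Λ_K(G)_{≥0}`-span of the `u j`.
def InSpanAbove (u : Fin k → Fin n → NovikovSubring K G) (r : ℝ)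
    (d : Fin n → NovikovSubring K G) : Prop :=
  ∃ b : Fin k → NovikovSubring K G, (∀ j, (r : WithTop ℝ) ≤ (b j : HahnSeries ℝ K).orderTop) ∧
    hahnVec d = ∑ j, (b j : HahnSeries ℝ K) • hahnVec (u j)

variable {u : Fin k → Fin n → NovikovSubring K G}

theorem isReductionStep_of_sub_eq {y z : Fin n → NovikovSubring K G} {c : Fin k → K}
    (hlt : nubarS y < nubarS z)
    (h : (fun i => (y i : HahnSeries ℝ K) - z i) =
      ∑ j, c j • fun i => HahnSeries.single (nubarS y).toReal (1 : K) * (u j i : HahnSeries ℝ K)) :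
    IsReductionStep u y z c := by
  refine ⟨hlt, funext fun i => ?_⟩
  have hi := congrFun h i
  simp only [Finset.sum_apply, Pi.smul_apply] at hi
  simp only [Pi.sub_apply, Finset.sum_apply, Pi.smul_apply, smul_eq_mul, hahnVec, hi]
  refine Finset.sum_congr rfl fun j _ => ?_
  ext g
  simp [HahnSeries.coeff_single_mul]

namespace IsReductionStep

variable {y z : Fin n → NovikovSubring K G} {c : Fin k → K}

theorem nubarS_eq (h : IsReductionStep u y z c) : nubarS y = (nubarS y).toReal :=
  coe_toReal_nubarS (ne_top_of_lt h.1)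

theorem inSpanAbove (h : IsReductionStep u y z c) : InSpanAbove u (nubarS y).toReal (y - z) :=
  ⟨fun j => ⟨_, single_mem_novikovSubring (toReal_nubarS_mem y) (c j)⟩,
    fun _ => HahnSeries.orderTop_single_le, h.2⟩

theorem exists_coeff_ne_zero (h : IsReductionStep u y z c) {i : Fin n} {g : ℝ}
    (hg : (hahnVec y i - hahnVec z i).coeff g ≠ 0) :
    ∃ j, (u j i : HahnSeries ℝ K).coeff (g - (nubarS y).toReal) ≠ 0 := by
  rw [← Pi.sub_apply, h.2, Finset.sum_apply, HahnSeries.coeff_sum] at hg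
  obtain ⟨j, -, hj⟩ := Finset.exists_ne_zero_of_sum_ne_zero hg
  refine ⟨j, fun h0 => hj ?_⟩
  rw [Pi.smul_apply, smul_eq_mul, HahnSeries.coeff_single_mul, hahnVec, h0, mul_zero]

end IsReductionStep

namespace InSpanAbove

variable {r : ℝ} {d d' : Fin n → NovikovSubring K G}

theorem zero : InSpanAbove u r 0 :=
  ⟨0, fun _ => by simp, by funext i; simp [hahnVec]⟩

theorem add (hd : InSpanAbove u r d) (hd' : InSpanAbove u r d') : InSpanAbove u r (d + d') := by
  obtain ⟨b, hb, hbd⟩ := hd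
  obtain ⟨b', hb', hbd'⟩ := hd'
  refine ⟨b + b', fun j => (le_min (hb j) (hb' j)).trans
    HahnSeries.min_orderTop_le_orderTop_add, ?_⟩
  change hahnVec d + hahnVec d' = _
  simp only [hbd, hbd', Pi.add_apply, Subring.coe_add, add_smul, Finset.sum_add_distrib]

theorem mono (hd : InSpanAbove u r d) {r' : ℝ} (hr : r' ≤ r) : InSpanAbove u r' d :=
  let ⟨b, hb, hbd⟩ := hd
  ⟨b, fun j => (WithTop.coe_le_coe.2 hr).trans (hb j), hbd⟩

theorem mem_span (hd : InSpanAbove u r d) :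
    d ∈ Submodule.span (NovikovSubring K G) (Set.range u) := by
  obtain ⟨b, -, hbd⟩ := hd
  have : d = ∑ j, b j • u j := by
    funext i
    apply Subtype.ext
    simpa [hahnVec, Finset.sum_apply] using congrFun hbd i
  rw [this]
  exact Submodule.sum_mem _ fun j _ => Submodule.smul_mem _ _ (Submodule.subset_span ⟨j, rfl⟩)

theorem exists_nonneg_coeffs (hd : InSpanAbove u r d) (hr : r ∈ G) :
    ∃ a : Fin k → NovikovSubring K G, (∀ j, 0 ≤ nuS (a j)) ∧
      (fun i => HahnSeries.single (-r) (1 : K) * (d i : HahnSeries ℝ K)) =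
        ∑ j, fun i => (a j : HahnSeries ℝ K) * (u j i : HahnSeries ℝ K) := by
  obtain ⟨b, hb, hbd⟩ := hd
  refine ⟨fun j => ⟨_, mul_mem (single_mem_novikovSubring (neg_mem hr) 1) (b j).2⟩,
    fun j => ?_, funext fun i => ?_⟩
  · rw [nuS, ← EReal.coe_zero, coe_le_nuH_iff]
    calc ((0 : ℝ) : WithTop ℝ) = (-r : ℝ) + r := by simp
      _ ≤ _ := add_le_add HahnSeries.orderTop_single_le (hb j)
      _ ≤ _ := HahnSeries.orderTop_add_le_mul
  · have hi := congrFun hbd i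
    simp only [hahnVec, Finset.sum_apply, Pi.smul_apply, smul_eq_mul] at hi
    simp only [hi, Finset.sum_apply, Finset.mul_sum, mul_assoc]

end InSpanAbove

theorem strictMonoOn_nubarS_of_isReductionStep {x : ℕ → Fin n → NovikovSubring K G}
    {a : ℕ → Fin k → K} {M : ℕ} (hx : ∀ m < M, IsReductionStep u (x m) (x (m + 1)) (a m)) :
    StrictMonoOn (fun m => nubarS (x m)) (Set.Iic M) :=
  strictMonoOn_Iic_of_lt_succ fun m hm => by simpa using (hx m hm).1

theorem inSpanAbove_sub_of_isReductionStep {x : ℕ → Fin n → NovikovSubring K G}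
    {a : ℕ → Fin k → K} {M : ℕ} (hx : ∀ m < M, IsReductionStep u (x m) (x (m + 1)) (a m)) :
    InSpanAbove u (nubarS (x 0)).toReal (x 0 - x M) := by
  induction M with
  | zero => simpa using InSpanAbove.zero
  | succ M ih =>
    have hstep := hx M (lt_add_one M)
    have hle : nubarS (x 0) ≤ nubarS (x M) :=
      (strictMonoOn_nubarS_of_isReductionStep hx).monotoneOn (by simp) (by simp) (Nat.zero_le M)
    rw [← sub_add_sub_cancel _ (x M)]
    exact (ih fun m hm => hx m (hm.trans (lt_add_one M))).add (hstep.inSpanAbove.mono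
      (EReal.toReal_le_toReal hle (nubarS_ne_bot _) (ne_top_of_lt hstep.1)))

end Reduction

section Infinite

variable {n k : ℕ} {u : Fin k → Fin n → NovikovSubring K G} {x : ℕ → Fin n → NovikovSubring K G}
  {a : ℕ → Fin k → K}

theorem finite_iUnion_support_inter_Iio (w : Fin n → NovikovSubring K G) (C : ℝ) :
    ((⋃ i, (w i : HahnSeries ℝ K).support) ∩ Set.Iio C).Finite := by
  rw [Set.iUnion_inter]
  exact Set.finite_iUnion fun i => (w i).2.2 C

theorem strictMono_toReal_nubarS (hx : ∀ m, IsReductionStep u (x m) (x (m + 1)) (a m)) :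
    StrictMono fun m => (nubarS (x m)).toReal := by
  refine strictMono_nat_of_lt_succ fun m => ?_
  have h := (hx m).1
  rw [(hx m).nubarS_eq, (hx (m + 1)).nubarS_eq] at h
  exact EReal.coe_lt_coe_iff.1 h

-- Each valuation is an exponent of `x 0` or an earlier valuation plus an exponent of some `u j`.
theorem exists_lt_toReal_nubarS (hx : ∀ m, IsReductionStep u (x m) (x (m + 1)) (a m)) (C : ℝ) :
    ∃ m, C < (nubarS (x m)).toReal := by
  refine (strictMono_toReal_nubarS hx).exists_lt_of_mem_or_sub_mem
    (S := ⋃ i, (x 0 i : HahnSeries ℝ K).support) (F := ⋃ j, ⋃ i, (u j i : HahnSeries ℝ K).support)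
    (finite_iUnion_support_inter_Iio (x 0)) (fun C => ?_) (fun m => ?_) C
  · rw [Set.iUnion_inter]
    exact Set.finite_iUnion fun j => finite_iUnion_support_inter_Iio (u j) C
  set g := (nubarS (x (m + 1))).toReal
  obtain ⟨i, hi⟩ := exists_coeff_ne_zero_of_nubarS_eq (hx (m + 1)).nubarS_eq
  by_cases h0 : (x 0 i : HahnSeries ℝ K).coeff g = 0
  · have htel := congrArg (fun w => (w i).coeff g)
      (Finset.sum_range_sub' (fun l => hahnVec (x l)) (m + 1))
    simp only [Finset.sum_apply, HahnSeries.coeff_sum] at htel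
    obtain ⟨l, hl, hne⟩ := Finset.exists_ne_zero_of_sum_ne_zero <| by
      rw [htel]
      simpa [hahnVec, h0] using hi
    obtain ⟨j, hj⟩ := (hx l).exists_coeff_ne_zero hne
    exact Or.inr ⟨l, Nat.lt_succ_iff.1 (Finset.mem_range.1 hl), Set.mem_iUnion₂.2 ⟨j, i, hj⟩⟩
  · exact Or.inl (Set.mem_iUnion.2 ⟨i, h0⟩)

theorem inSpanAbove_of_forall_isReductionStep (hu : ∀ j, 0 ≤ nubarS (u j))
    (hx : ∀ m, IsReductionStep u (x m) (x (m + 1)) (a m)) :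
    InSpanAbove u (nubarS (x 0)).toReal (x 0) := by
  set ρ : ℕ → ℝ := fun m => (nubarS (x m)).toReal
  have hcof := exists_lt_toReal_nubarS hx
  set P : ℕ → Fin k → HahnSeries ℝ K :=
    fun M j => ∑ l ∈ Finset.range M, HahnSeries.single (ρ l) (a l j)
  have hP : ∀ M, hahnVec (x 0) - hahnVec (x M) = ∑ j, P M j • hahnVec (u j) := fun M =>
    sub_eq_sum_sum_smul_of_sub_succ_eq fun m _ => (hx m).2
  have hlim : ∀ j, ∃ b, ∀ M, (ρ M : WithTop ℝ) ≤ (b - P M j).orderTop := fun j =>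
    HahnSeries.exists_le_orderTop_sub_of_le_orderTop_sub_succ _
      (strictMono_toReal_nubarS hx).monotone hcof fun M => by
        simp [P, Finset.sum_range_succ, HahnSeries.orderTop_single_le]
  choose b hb using hlim
  have hbmem : ∀ j, b j ∈ NovikovSubring K G := fun j =>
    mem_novikovSubring_of_le_orderTop_sub
      (fun M => sum_mem fun l _ => single_mem_novikovSubring (toReal_nubarS_mem _) _) hcof (hb j)
  refine ⟨fun j => ⟨b j, hbmem j⟩, fun j => by simpa [P] using hb j 0, ?_⟩
  rw [← sub_eq_zero]
  funext i
  refine HahnSeries.eq_zero_of_forall_le_orderTop hcof fun M => ?_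
  have hrem : hahnVec (x 0) - ∑ j, b j • hahnVec (u j) =
      hahnVec (x M) - ∑ j, (b j - P M j) • hahnVec (u j) := by
    simp only [sub_smul, Finset.sum_sub_distrib, ← hP M]
    abel
  rw [hrem, Pi.sub_apply]
  refine (le_min ?_ ?_).trans HahnSeries.min_orderTop_le_orderTop_sub
  · exact coe_le_nubarS_iff.1 (hx M).nubarS_eq.ge i
  · rw [Finset.sum_apply]
    refine HahnSeries.le_orderTop_sum fun j _ => ?_
    calc (ρ M : WithTop ℝ) = ρ M + (0 : ℝ) := by simp
      _ ≤ (b j - P M j).orderTop + (u j i : HahnSeries ℝ K).orderTop :=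
        add_le_add (hb j M) (coe_le_nubarS_iff.1 (by simpa using hu j) i)
      _ ≤ _ := HahnSeries.orderTop_add_le_mul

end Infinite

set_option synthInstance.maxHeartbeats 1000000 in
theorem fixed_point_lemma_general {K : Type*} [CommRing K] (G : AddSubgroup ℝ) (n k : ℕ)
    (u : Fin k → (Fin n → NovikovSubring K G))
    (hu : ∀ j, nubarS (u j) = 0)
    (V : Submodule (NovikovSubring K G) (Fin n → NovikovSubring K G))
    (φ : V → V)
    (h1 : ∀ v : V, φ v = v ∨ nubarS (v : Fin n → NovikovSubring K G)
        < nubarS ((φ v : V) : Fin n → NovikovSubring K G))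
    (h2 : ∀ v : V, φ v ≠ v → ∃ a : Fin k → K,
      (fun i => ((v : Fin n → NovikovSubring K G) i : HahnSeries ℝ K)
          - (((φ v : V) : Fin n → NovikovSubring K G) i : HahnSeries ℝ K))
        = ∑ j, a j • (fun i =>
            HahnSeries.single ((nubarS (v : Fin n → NovikovSubring K G)).toReal)
              (1 : K) * ((u j i : HahnSeries ℝ K)))) :
    ∀ v : V, ∃ w : V, φ w = w ∧
      (v : Fin n → NovikovSubring K G) - (w : Fin n → NovikovSubring K G) ∈
        Submodule.span (NovikovSubring K G) (Set.range u) ∧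
      ((v : Fin n → NovikovSubring K G) - (w : Fin n → NovikovSubring K G) = 0 ∨
        (nubarS ((v : Fin n → NovikovSubring K G) - (w : Fin n → NovikovSubring K G))
            = nubarS (v : Fin n → NovikovSubring K G) ∧
          ∃ a : Fin k → NovikovSubring K G, (∀ j, 0 ≤ nuS (a j)) ∧
            (fun i => HahnSeries.single
                (-(nubarS ((v : Fin n → NovikovSubring K G) - (w : Fin n → NovikovSubring K G))).toReal) (1 : K)
              * ((((v : Fin n → NovikovSubring K G) - (w : Fin n → NovikovSubring K G)) i : HahnSeries ℝ K)))
              = ∑ j, (fun i => ((a j : HahnSeries ℝ K) * (u j i : HahnSeries ℝ K))))) := by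
  intro v
  suffices ∃ w : V, φ w = w ∧ InSpanAbove u (nubarS (v : Fin n → NovikovSubring K G)).toReal
      (v - w : Fin n → NovikovSubring K G) ∧ ((v - w : Fin n → NovikovSubring K G) = 0 ∨
        nubarS (v - w : Fin n → NovikovSubring K G) = nubarS (v : Fin n → NovikovSubring K G)) by
    obtain ⟨w, hw, hrep, hd⟩ := this
    refine ⟨w, hw, hrep.mem_span, hd.imp_right fun hd => ⟨hd, ?_⟩⟩
    rw [hd]
    exact hrep.exists_nonneg_coeffs (toReal_nubarS_mem _)
  have hstep : ∀ y : V, ∃ c, φ y ≠ y → IsReductionStep u y (φ y) c := by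
    intro y
    by_cases hy : φ y = y
    · exact ⟨0, fun h => absurd hy h⟩
    · obtain ⟨c, hc⟩ := h2 y hy
      exact ⟨c, fun _ => isReductionStep_of_sub_eq ((h1 y).resolve_left hy) hc⟩
  choose c hc using hstep
  have horbit : ∀ m, φ (φ^[m] v) ≠ φ^[m] v →
      IsReductionStep u (φ^[m] v : V) (φ^[m + 1] v : V) (c (φ^[m] v)) := fun m hm => by
    rw [Function.iterate_succ_apply']
    exact hc _ hm
  by_cases hfix : ∃ M, φ (φ^[M] v) = φ^[M] v
  · have hsteps := fun m (hm : m < Nat.find hfix) => horbit m (Nat.find_min hfix hm)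
    refine ⟨_, Nat.find_spec hfix, inSpanAbove_sub_of_isReductionStep hsteps, ?_⟩
    rcases Nat.eq_zero_or_pos (Nat.find hfix) with h0 | hpos
    · exact Or.inl (by rw [h0]; exact sub_self _)
    · exact Or.inr (nubarS_sub_eq_left
        (strictMonoOn_nubarS_of_isReductionStep hsteps (by simp) (by simp) hpos))
  · push Not at hfix
    have hφ0 : φ 0 = 0 := (h1 0).resolve_right (by simp [nubarS_zero])
    have hrep := inSpanAbove_of_forall_isReductionStep (fun j => (hu j).ge)
      fun m => horbit m (hfix m)
    exact ⟨0, hφ0, by simpa using hrep, Or.inr (by simp)⟩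

set_option synthInstance.maxHeartbeats 1000000 in
/-- fixed point lemma: let `u_1,…,u_k ∈ Λ_K(G)^n` with
`ν̄(u_j) = 0`, `U` their `Λ_K(G)`-span, `V ⊇ U` a submodule, and `φ : V → V`
a (not necessarily additive) map such that (i) `φ(v) = v` or
`ν̄(φ(v)) > ν̄(v)`, and (ii) if `φ(v) ≠ v` then `v − φ(v)` lies in the
`K`-span of `T^{ν̄(v)}u_1,…,T^{ν̄(v)}u_k`.  Then every `v ∈ V` admits `u ∈ U`
with `φ(v−u) = v−u`, and `u = 0` or `ν̄(u) = ν̄(v)` with `T^{−ν̄(u)}u` in the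
`Λ_K(G)_{≥0}`-span of `u_1,…,u_k`. -/
theorem fixed_point_lemma {K : Type*} [CommRing K] (G : AddSubgroup ℝ) (n k : ℕ)
    (u : Fin k → (Fin n → NovikovSubring K G))
    (hu : ∀ j, nubarS (u j) = 0)
    (V : Submodule (NovikovSubring K G) (Fin n → NovikovSubring K G))
    (hUV : Submodule.span (NovikovSubring K G) (Set.range u) ≤ V)
    (φ : V → V)
    (h1 : ∀ v : V, φ v = v ∨ nubarS (v : Fin n → NovikovSubring K G)
        < nubarS ((φ v : V) : Fin n → NovikovSubring K G))
    (h2 : ∀ v : V, φ v ≠ v → ∃ a : Fin k → K,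
      (fun i => ((v : Fin n → NovikovSubring K G) i : HahnSeries ℝ K)
          - (((φ v : V) : Fin n → NovikovSubring K G) i : HahnSeries ℝ K))
        = ∑ j, a j • (fun i =>
            HahnSeries.single ((nubarS (v : Fin n → NovikovSubring K G)).toReal)
              (1 : K) * ((u j i : HahnSeries ℝ K)))) :
    ∀ v : V, ∃ w : V, φ w = w ∧
      (v : Fin n → NovikovSubring K G) - (w : Fin n → NovikovSubring K G) ∈
        Submodule.span (NovikovSubring K G) (Set.range u) ∧
      ((v : Fin n → NovikovSubring K G) - (w : Fin n → NovikovSubring K G) = 0 ∨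
        (nubarS ((v : Fin n → NovikovSubring K G) - (w : Fin n → NovikovSubring K G))
            = nubarS (v : Fin n → NovikovSubring K G) ∧
          ∃ a : Fin k → NovikovSubring K G, (∀ j, 0 ≤ nuS (a j)) ∧
            (fun i => HahnSeries.single
                (-(nubarS ((v : Fin n → NovikovSubring K G) - (w : Fin n → NovikovSubring K G))).toReal) (1 : K)
              * ((((v : Fin n → NovikovSubring K G) - (w : Fin n → NovikovSubring K G)) i : HahnSeries ℝ K)))
              = ∑ j, (fun i => ((a j : HahnSeries ℝ K) * (u j i : HahnSeries ℝ K))))) :=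
  fixed_point_lemma_general G n k u hu V φ h1 h2
end
end

section
/- Let K be a Noetherian ring and V ≤ Λ_K(G)^n a Λ_K(G)-submodule. If u_1,…,u_k ∈ V_{≥0} are such that their images ũ_1,…,ũ_k span the K-module Ṽ = V_{≥0}/V_{+}, then u_1,…,u_k span V_{≥0} over Λ_K(G)_{≥0}. -/
set_option synthInstance.maxHeartbeats 1000000
set_option maxHeartbeats 1000000
open Classical
noncomputable section

variable {K : Type*} [CommRing K]

variable {G : AddSubgroup ℝ}

/-!
Successive approximation. If `r ∈ V` has `ν̄(r) = c`, then `t^{-c} r ∈ V_{≥0}`, so the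
hypothesis yields `b ∈ K^k` with `ν̄(r - ∑ t^c b_j u_j) > c`. Starting from `r = v` and
iterating, one corrects the coefficients `a_j` by one monomial at a time. All exponents that
occur lie in the additive monoid `E ⊆ G ∩ [0, ∞)` generated by the exponents of `v` and of the
`u_j`, and `E` has only finitely many elements below any bound. Hence the valuations of the
remainders tend to `∞`, the coefficients of the `a_j` stabilise, and their limits are elements of
`Λ_K(G)_{≥0}` with `v = ∑ a_j u_j`.
-/

lemma le_nuH_iff {x : HahnSeries ℝ K} {c : ℝ} :
    (c : EReal) ≤ nuH x ↔ ∀ g < c, x.coeff g = 0 := by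
  unfold nuH
  split_ifs with hx
  · simp [hx]
  · rw [EReal.coe_le_coe_iff]
    refine ⟨fun hc g hg => HahnSeries.coeff_eq_zero_of_lt_order (hg.trans_le hc), fun h => ?_⟩
    exact not_lt.1 fun hlt => hx (HahnSeries.coeff_order_eq_zero.1 (h _ hlt))

lemma lt_nuH_iff {x : HahnSeries ℝ K} {c : ℝ} :
    (c : EReal) < nuH x ↔ ∀ g ≤ c, x.coeff g = 0 := by
  unfold nuH
  split_ifs with hx
  · simp [hx]
  · rw [EReal.coe_lt_coe_iff]
    refine ⟨fun hc g hg => HahnSeries.coeff_eq_zero_of_lt_order (hg.trans_lt hc), fun h => ?_⟩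
    exact not_le.1 fun hle => hx (HahnSeries.coeff_order_eq_zero.1 (h _ hle))

lemma nuH_eq_top_iff {x : HahnSeries ℝ K} : nuH x = ⊤ ↔ x = 0 := by
  unfold nuH
  split_ifs with hx <;> simp [hx]

lemma zero_le_nuH_iff {x : HahnSeries ℝ K} : 0 ≤ nuH x ↔ x.support ⊆ Set.Ici 0 := by
  rw [← EReal.coe_zero, le_nuH_iff]
  exact ⟨fun h g hg => not_lt.1 fun hlt => hg (h g hlt),
    fun h g hg => not_not.1 fun hne => hg.not_ge (h hne)⟩

section Vectors

variable {n : ℕ}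

lemma le_nubarH_iff {v : Fin n → HahnSeries ℝ K} {c : ℝ} :
    (c : EReal) ≤ nubarH v ↔ ∀ i, ∀ g < c, (v i).coeff g = 0 := by
  simp only [nubarH, le_iInf_iff, le_nuH_iff]

lemma exists_nuH_eq_nubarH [NeZero n] (v : Fin n → HahnSeries ℝ K) :
    ∃ i, nuH (v i) = nubarH v :=
  exists_eq_ciInf_of_finite

lemma lt_nubarH_iff {v : Fin n → HahnSeries ℝ K} {c : ℝ} :
    (c : EReal) < nubarH v ↔ ∀ i, ∀ g ≤ c, (v i).coeff g = 0 := by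
  refine ⟨fun h i => lt_nuH_iff.1 (h.trans_le (iInf_le _ i)), fun h => ?_⟩
  rcases n.eq_zero_or_pos with rfl | hn
  · rw [nubarH, iInf_of_empty]
    exact EReal.coe_lt_top c
  · have : NeZero n := ⟨hn.ne'⟩
    obtain ⟨i, hi⟩ := exists_nuH_eq_nubarH v
    exact hi ▸ lt_nuH_iff.2 (h i)

lemma nubarH_eq_top_iff {v : Fin n → HahnSeries ℝ K} : nubarH v = ⊤ ↔ v = 0 := by
  simp only [nubarH, iInf_eq_top, nuH_eq_top_iff, funext_iff, Pi.zero_apply]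

lemma exists_nubarH_eq_order {v : Fin n → HahnSeries ℝ K} (hv : v ≠ 0) :
    ∃ i, v i ≠ 0 ∧ nubarH v = ((v i).order : EReal) := by
  obtain ⟨j, hj⟩ := Function.ne_iff.1 hv
  have : NeZero n := ⟨fun h => (h ▸ j).elim0⟩
  obtain ⟨i, hi⟩ := exists_nuH_eq_nubarH v
  have hvi : v i ≠ 0 := by
    intro h0
    have : nuH (v i) ≤ nuH (v j) := hi ▸ iInf_le _ j
    rw [nuH_eq_top_iff.2 h0, top_le_iff, nuH_eq_top_iff] at this
    exact hj this
  exact ⟨i, hvi, by rw [← hi, nuH, if_neg hvi]⟩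

lemma exists_mem_eq_nubarH {E : Set ℝ} {v : Fin n → HahnSeries ℝ K}
    (hv : ∀ i, (v i).support ⊆ E) (hv_top : nubarH v ≠ ⊤) : ∃ e ∈ E, nubarH v = e := by
  obtain ⟨i, hvi, hi⟩ := exists_nubarH_eq_order (mt nubarH_eq_top_iff.2 hv_top)
  exact ⟨_, hv i (mt HahnSeries.coeff_order_eq_zero.1 hvi), hi⟩

end Vectors

lemma coeff_mul_eq_zero_of_le {x y : HahnSeries ℝ K} {c : ℝ}
    (hx : ∀ g ≤ c, x.coeff g = 0) (hy : ∀ g < 0, y.coeff g = 0) : (x * y).coeff c = 0 := by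
  rw [HahnSeries.coeff_mul]
  refine Finset.sum_eq_zero fun p hp => ?_
  rw [Finset.mem_antidiagonal] at hp
  rcases le_or_gt p.1 c with h | h
  · rw [hx _ h, zero_mul]
  · rw [hy _ (by linarith [hp.2.2]), mul_zero]

def LeftFinite (S : Set ℝ) : Prop := ∀ C : ℝ, (S ∩ Set.Iio C).Finite

namespace LeftFinite

variable {S : Set ℝ}

lemma iUnion {ι : Type*} [Finite ι] {T : ι → Set ℝ} (hT : ∀ i, LeftFinite (T i)) :
    LeftFinite (⋃ i, T i) := fun C => by
  rw [Set.iUnion_inter]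
  exact Set.finite_iUnion fun i => hT i C

lemma isPWO (hS : LeftFinite S) : S.IsPWO := by
  refine Set.IsWF.isPWO (Set.isWF_iff_no_descending_seq.2 fun f hf hfS => ?_)
  refine Set.infinite_of_injective_forall_mem hf.injective (fun m => ?_) (hS (f 0 + 1))
  exact ⟨hfS m, (hf.antitone m.zero_le).trans_lt (lt_add_one _)⟩

-- An element `∑ a_x • x < C` of the closure has each multiplicity `a_x < C / x`.
lemma finite_closure_inter_Iio_of_finite {F : Set ℝ} (hF : F.Finite) (hF0 : ∀ x ∈ F, 0 < x)
    (C : ℝ) : ((AddSubmonoid.closure F : Set ℝ) ∩ Set.Iio C).Finite := by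
  have := hF.fintype
  refine ((Set.finite_Iic fun x : F => ⌈C / x⌉₊).image
    fun a : F → ℕ => ∑ x, a x • (x : ℝ)).subset ?_
  rintro y ⟨hy, hyC⟩
  obtain ⟨a, rfl⟩ := AddSubmonoid.mem_closure_iff_of_fintype.1 hy
  refine ⟨a, fun x => ?_, rfl⟩
  have hle : a x • (x : ℝ) ≤ ∑ x, a x • (x : ℝ) :=
    Finset.single_le_sum (f := fun x : F => a x • (x : ℝ))
      (fun x _ => nsmul_nonneg (hF0 x x.2).le _) (Finset.mem_univ x)
  rw [nsmul_eq_mul] at hle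
  exact Nat.cast_le.1 (((lt_div_iff₀ (hF0 x x.2)).2 (hle.trans_lt hyC)).le.trans (Nat.le_ceil _))

lemma addSubmonoidClosure (hS : LeftFinite S) (hS0 : ∀ x ∈ S, 0 ≤ x) :
    LeftFinite (AddSubmonoid.closure S) := by
  intro C
  have below : ∀ x ∈ AddSubmonoid.closure S,
      0 ≤ x ∧ (x < C → x ∈ AddSubmonoid.closure (S ∩ Set.Ioo 0 C)) := by
    intro x hx
    induction hx using AddSubmonoid.closure_induction with
    | mem x hx =>
      refine ⟨hS0 x hx, fun hxC => ?_⟩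
      rcases (hS0 x hx).eq_or_lt with rfl | hpos
      · exact zero_mem _
      · exact AddSubmonoid.subset_closure ⟨hx, hpos, hxC⟩
    | zero => exact ⟨le_rfl, fun _ => zero_mem _⟩
    | add x y _ _ hx hy =>
      refine ⟨add_nonneg hx.1 hy.1, fun hxy => add_mem (hx.2 ?_) (hy.2 ?_)⟩ <;>
        linarith [hx.1, hy.1]
  have hfin : (S ∩ Set.Ioo 0 C).Finite := (hS C).subset fun x hx => ⟨hx.1, hx.2.2⟩
  exact (finite_closure_inter_Iio_of_finite hfin (fun x hx => hx.2.1) C).subset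
    fun x ⟨hx, hxC⟩ => ⟨(below x hx).2 hxC, hxC⟩

lemma exists_lt (hS : LeftFinite S) {s : ℕ → EReal} (hsS : ∀ m, s m ≠ ⊤ → ∃ e ∈ S, s m = e)
    (hs : ∀ m, s m < s (m + 1) ∨ s (m + 1) = ⊤) (g : ℝ) : ∃ m, (g : EReal) < s m := by
  by_contra! h
  have hfin : ∀ m, s m ≠ ⊤ := fun m => ((h m).trans_lt (EReal.coe_lt_top g)).ne
  choose e heS hse using fun m => hsS m (hfin m)
  have he : StrictMono e := strictMono_nat_of_lt_succ fun m => by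
    rw [← EReal.coe_lt_coe_iff, ← hse, ← hse]
    exact (hs m).resolve_right (hfin _)
  have hbound : ∀ m, e m ∈ S ∩ Set.Iio (g + 1) := fun m =>
    ⟨heS m, (EReal.coe_le_coe_iff.1 (hse m ▸ h m)).trans_lt (lt_add_one g)⟩
  exact Set.infinite_of_injective_forall_mem he.injective hbound (hS (g + 1))

end LeftFinite

namespace HahnSeries

variable (K) in
def supported (E : AddSubmonoid ℝ) : Subring (HahnSeries ℝ K) where
  carrier := {x | x.support ⊆ E}
  zero_mem' := by simp
  one_mem' := by
    change support _ ⊆ _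
    rw [← single_zero_one]
    exact support_single_subset.trans (Set.singleton_subset_iff.2 E.zero_mem)
  add_mem' hx hy := (support_add_subset _ _).trans (Set.union_subset hx hy)
  neg_mem' hx := support_neg.subset.trans hx
  mul_mem' hx hy g hg := by
    obtain ⟨a, ha, b, hb, rfl⟩ := support_mul_subset hg
    exact E.add_mem (hx ha) (hy hb)

lemma mem_supported {E : AddSubmonoid ℝ} {x : HahnSeries ℝ K} :
    x ∈ supported K E ↔ x.support ⊆ E := Iff.rfl

lemma single_mem_supported {E : AddSubmonoid ℝ} {c : ℝ} (hc : c ∈ E) (a : K) :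
    single c a ∈ supported K E :=
  support_single_subset.trans (Set.singleton_subset_iff.2 hc)

lemma exists_limit_of_coeff_stable {E : Set ℝ} (hE : E.IsPWO) {x : ℕ → HahnSeries ℝ K}
    (hxE : ∀ m, (x m).support ⊆ E) {s : ℕ → EReal} (hs : Monotone s)
    (hs_top : ∀ g : ℝ, ∃ m, (g : EReal) < s m)
    (hx : ∀ m (g : ℝ), (g : EReal) < s m → (x (m + 1)).coeff g = (x m).coeff g) :
    ∃ y : HahnSeries ℝ K, y.support ⊆ E ∧
      ∀ m (g : ℝ), (g : EReal) < s m → y.coeff g = (x m).coeff g := by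
  have stable : ∀ m (g : ℝ), (g : EReal) < s m → ∀ m' ≥ m, (x m').coeff g = (x m).coeff g := by
    intro m g hg m' hm'
    induction m', hm' using Nat.le_induction with
    | base => rfl
    | succ m' hm' ih => rw [hx m' g (hg.trans_le (hs hm')), ih]
  choose M hM using hs_top
  refine ⟨⟨fun g => (x (M g)).coeff g, hE.mono fun g hg => hxE _ hg⟩, fun g hg => hxE _ hg,
    fun m g hg => ?_⟩
  change (x (M g)).coeff g = (x m).coeff g
  rw [← stable _ g (hM g) _ (le_max_right m (M g)), stable m g hg _ (le_max_left m (M g))]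

end HahnSeries

lemma mem_novikovSubring_of_support_subset {S : Set ℝ} (hSG : S ⊆ G) (hS : LeftFinite S)
    {x : HahnSeries ℝ K} (hx : x.support ⊆ S) : x ∈ NovikovSubring K G :=
  ⟨hx.trans hSG, fun C => (hS C).subset (Set.inter_subset_inter_left _ hx)⟩

namespace NovikovSubring

def single (c : G) (a : K) : NovikovSubring K G :=
  ⟨HahnSeries.single (c : ℝ) a, mem_novikovSubring_of_support_subset
    (Set.singleton_subset_iff.2 c.2) (fun _ => (Set.finite_singleton _).inter_of_left _)
    HahnSeries.support_single_subset⟩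

@[simp]
lemma coe_single (c : G) (a : K) :
    (single c a : HahnSeries ℝ K) = HahnSeries.single (c : ℝ) a := rfl

lemma coe_sum_smul_apply {ι : Type*} [Fintype ι] {n : ℕ} (a : ι → NovikovSubring K G)
    (u : ι → Fin n → NovikovSubring K G) (i : Fin n) :
    (((∑ j, a j • u j) i : NovikovSubring K G) : HahnSeries ℝ K) =
      ∑ j, (a j : HahnSeries ℝ K) * u j i := by
  simp [Finset.sum_apply]

end NovikovSubring

lemma exists_exponent_addSubmonoid {ι : Type*} [Finite ι]
    (x : ι → NovikovSubring K G) (hx : ∀ i, 0 ≤ nuS (x i)) :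
    ∃ E : AddSubmonoid ℝ, (E : Set ℝ) ⊆ G ∧ (E : Set ℝ) ⊆ Set.Ici 0 ∧ LeftFinite E ∧
      ∀ i, (x i : HahnSeries ℝ K) ∈ HahnSeries.supported K E := by
  set W := ⋃ i, (x i : HahnSeries ℝ K).support
  have hW0 : W ⊆ Set.Ici 0 := Set.iUnion_subset fun i => zero_le_nuH_iff.1 (hx i)
  refine ⟨AddSubmonoid.closure W, ?_, ?_, ?_, fun i => HahnSeries.mem_supported.2
    ((Set.subset_iUnion (fun i => (x i : HahnSeries ℝ K).support) i).trans
      AddSubmonoid.subset_closure)⟩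
  · exact AddSubmonoid.closure_le (S := G.toAddSubmonoid).2 (Set.iUnion_subset fun i => (x i).2.1)
  · exact AddSubmonoid.closure_le (S := AddSubmonoid.nonneg ℝ).2 hW0
  · exact (LeftFinite.iUnion fun i => (x i).2.2).addSubmonoidClosure hW0

section Approximation

variable {n k : ℕ} {E : AddSubmonoid ℝ}

-- The images of the `u j` span `Ṽ = V_{≥0}/V_{+}` over `K`.
def ResiduesSpan (V : Submodule (NovikovSubring K G) (Fin n → NovikovSubring K G))
    (u : Fin k → Fin n → NovikovSubring K G) : Prop :=
  ∀ v, v ∈ V → 0 ≤ nubarS v → ∃ a : Fin k → K,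
    0 < nubarH (fun i => ((v i : HahnSeries ℝ K) - ∑ j, a j • (u j i : HahnSeries ℝ K)))

def remainder (v : Fin n → NovikovSubring K G) (u : Fin k → Fin n → NovikovSubring K G)
    (a : Fin k → NovikovSubring K G) : Fin n → NovikovSubring K G :=
  v - ∑ j, a j • u j

variable {V : Submodule (NovikovSubring K G) (Fin n → NovikovSubring K G)}
  {u : Fin k → Fin n → NovikovSubring K G} {v : Fin n → NovikovSubring K G}

lemma coe_remainder_apply (a : Fin k → NovikovSubring K G) (i : Fin n) :
    (remainder v u a i : HahnSeries ℝ K) = v i - ∑ j, (a j : HahnSeries ℝ K) * u j i := by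
  simp [remainder]

lemma remainder_mem (hv : v ∈ V) (huV : ∀ j, u j ∈ V) (a : Fin k → NovikovSubring K G) :
    remainder v u a ∈ V :=
  V.sub_mem hv (V.sum_mem fun j _ => V.smul_mem _ (huV j))

lemma remainder_mem_supported (hvE : ∀ i, (v i : HahnSeries ℝ K) ∈ HahnSeries.supported K E)
    (huE : ∀ j i, (u j i : HahnSeries ℝ K) ∈ HahnSeries.supported K E)
    {a : Fin k → NovikovSubring K G}
    (haE : ∀ j, (a j : HahnSeries ℝ K) ∈ HahnSeries.supported K E) (i : Fin n) :
    (remainder v u a i : HahnSeries ℝ K) ∈ HahnSeries.supported K E := by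
  rw [coe_remainder_apply]
  exact sub_mem (hvE i) (sum_mem fun j _ => mul_mem (haE j) (huE j i))

lemma coeff_eq_coeff_sum_smul_apply
    (hu0 : ∀ j i, (u j i : HahnSeries ℝ K).support ⊆ Set.Ici 0)
    {a b : Fin k → NovikovSubring K G} {g : ℝ} (hg : (g : EReal) < nubarS (remainder v u a))
    (hab : ∀ j, ∀ g' ≤ g, (a j : HahnSeries ℝ K).coeff g' = (b j : HahnSeries ℝ K).coeff g')
    (i : Fin n) :
    (v i : HahnSeries ℝ K).coeff g =
      (((∑ j, b j • u j) i : NovikovSubring K G) : HahnSeries ℝ K).coeff g := by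
  have hrem : (remainder v u a i : HahnSeries ℝ K).coeff g = 0 := lt_nubarH_iff.1 hg i g le_rfl
  have htail : ∀ j, (((a j : HahnSeries ℝ K) - b j) * u j i).coeff g = 0 := fun j =>
    coeff_mul_eq_zero_of_le (fun g' hg' => by rw [HahnSeries.coeff_sub, hab j g' hg', sub_self])
      (fun g' hg' => not_not.1 fun h => hg'.not_ge (hu0 j i h))
  have hsplit : (v i : HahnSeries ℝ K) - ∑ j, (b j : HahnSeries ℝ K) * u j i =
      remainder v u a i + ∑ j, ((a j : HahnSeries ℝ K) - b j) * u j i := by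
    simp only [coe_remainder_apply, sub_mul, Finset.sum_sub_distrib]
    ring
  have := congrArg (fun x : HahnSeries ℝ K => x.coeff g) hsplit
  simp only [HahnSeries.coeff_sub, HahnSeries.coeff_add, HahnSeries.coeff_sum, hrem, htail,
    Finset.sum_const_zero, add_zero, sub_eq_zero] at this
  rw [NovikovSubring.coe_sum_smul_apply, this, HahnSeries.coeff_sum]

namespace ResiduesSpan

-- Shifting by `t^{-c}` moves `r` into `V_{≥0}`, where the hypothesis removes its leading term.
lemma exists_lt_nubarS_sub (hspan : ResiduesSpan V u) {r : Fin n → NovikovSubring K G}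
    (hr : r ∈ V) {c : G} (hc : (c : EReal) ≤ nubarS r) :
    ∃ b : Fin k → K, (c : EReal) < nubarS (r - ∑ j, NovikovSubring.single c (b j) • u j) := by
  set w := NovikovSubring.single (-c) (1 : K) • r
  have hw : ∀ i g, (w i : HahnSeries ℝ K).coeff g = (r i : HahnSeries ℝ K).coeff (g + c) := by
    intro i g
    change (HahnSeries.single ((-c : G) : ℝ) (1 : K) * (r i : HahnSeries ℝ K)).coeff g = _
    rw [HahnSeries.coeff_single_mul, one_mul, AddSubgroup.coe_neg, sub_neg_eq_add]
  have hw0 : 0 ≤ nubarS w := by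
    rw [← EReal.coe_zero, nubarS, le_nubarH_iff]
    exact fun i g hg => (hw i g).trans (le_nubarH_iff.1 hc i _ (by linarith))
  obtain ⟨b, hb⟩ := hspan w (V.smul_mem _ hr) hw0
  refine ⟨b, lt_nubarH_iff.2 fun i g hg => ?_⟩
  have := lt_nubarH_iff.1 (EReal.coe_zero ▸ hb) i (g - c) (by linarith)
  simp only [HahnSeries.coeff_sub, HahnSeries.coeff_sum, HahnSeries.coeff_smul, hw,
    sub_add_cancel] at this
  simpa [NovikovSubring.coe_sum_smul_apply, HahnSeries.coeff_sum, HahnSeries.coeff_single_mul]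
    using this

-- `a'` is `a` plus the monomials `t^c b_j` of the previous lemma, at `c = ν̄(v - ∑ a_j u_j)`.
lemma exists_next (hspan : ResiduesSpan V u) (hv : v ∈ V) (huV : ∀ j, u j ∈ V)
    (hvE : ∀ i, (v i : HahnSeries ℝ K) ∈ HahnSeries.supported K E)
    (huE : ∀ j i, (u j i : HahnSeries ℝ K) ∈ HahnSeries.supported K E)
    (a : Fin k → NovikovSubring K G) : ∃ a' : Fin k → NovikovSubring K G,
    (∀ j (g : ℝ), (g : EReal) < nubarS (remainder v u a) →
      (a' j : HahnSeries ℝ K).coeff g = (a j : HahnSeries ℝ K).coeff g) ∧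
    (nubarS (remainder v u a) < nubarS (remainder v u a') ∨ nubarS (remainder v u a') = ⊤) ∧
    ((∀ j, (a j : HahnSeries ℝ K) ∈ HahnSeries.supported K E) →
      ∀ j, (a' j : HahnSeries ℝ K) ∈ HahnSeries.supported K E) := by
  set r := remainder v u a
  by_cases hr : r = 0
  · refine ⟨a, fun _ _ _ => rfl, Or.inr ?_, id⟩
    change nubarH (fun i => (r i : HahnSeries ℝ K)) = ⊤
    simp [hr, nubarH_eq_top_iff, Pi.zero_def]
  have hr' : (fun i => (r i : HahnSeries ℝ K)) ≠ 0 :=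
    fun h => hr (funext fun i => Subtype.ext (congrFun h i))
  obtain ⟨i, hri, hc⟩ := exists_nubarH_eq_order hr'
  have hc_supp := mt HahnSeries.coeff_order_eq_zero.1 hri
  let c : G := ⟨_, (r i).2.1 hc_supp⟩
  obtain ⟨b, hb⟩ := hspan.exists_lt_nubarS_sub (remainder_mem hv huV a) (c := c) hc.ge
  have hrem : remainder v u (a + fun j => NovikovSubring.single c (b j)) =
      r - ∑ j, NovikovSubring.single c (b j) • u j := by
    simp only [r, remainder, Pi.add_apply, add_smul, Finset.sum_add_distrib, sub_add_eq_sub_sub]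
  refine ⟨a + fun j => NovikovSubring.single c (b j), fun j g hg => ?_, Or.inl ?_,
    fun haE j => ?_⟩
  · have hgc : g ≠ c := (EReal.coe_lt_coe_iff.1 (hc ▸ hg)).ne
    simp [HahnSeries.coeff_single_of_ne hgc]
  · rw [hrem, nubarS, hc]
    exact hb
  · exact add_mem (haE j)
      (HahnSeries.single_mem_supported (remainder_mem_supported hvE huE haE i hc_supp) _)

lemma exists_eq_sum_smul (hspan : ResiduesSpan V u) (hv : v ∈ V) (huV : ∀ j, u j ∈ V)
    (hvE : ∀ i, (v i : HahnSeries ℝ K) ∈ HahnSeries.supported K E)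
    (huE : ∀ j i, (u j i : HahnSeries ℝ K) ∈ HahnSeries.supported K E)
    (hEG : (E : Set ℝ) ⊆ G) (hE0 : (E : Set ℝ) ⊆ Set.Ici 0) (hE : LeftFinite E) :
    ∃ a : Fin k → NovikovSubring K G,
      (∀ j, (a j : HahnSeries ℝ K).support ⊆ E) ∧ v = ∑ j, a j • u j := by
  choose next hnext_coeff hnext_lt hnext_mem using hspan.exists_next hv huV hvE huE
  set A : ℕ → Fin k → NovikovSubring K G := fun m => next^[m] 0
  have hA_succ : ∀ m, A (m + 1) = next (A m) := fun m => Function.iterate_succ_apply' next m 0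
  have hAE : ∀ m j, (A m j : HahnSeries ℝ K) ∈ HahnSeries.supported K E := by
    intro m
    induction m with
    | zero => exact fun j => zero_mem _
    | succ m ih => exact hA_succ m ▸ hnext_mem _ ih
  set s : ℕ → EReal := fun m => nubarS (remainder v u (A m))
  have hs : ∀ m, s m < s (m + 1) ∨ s (m + 1) = ⊤ := fun m => by
    simpa only [s, hA_succ] using hnext_lt (A m)
  have hs_mono : Monotone s :=
    monotone_nat_of_le_succ fun m => (hs m).elim le_of_lt fun h => h ▸ le_top
  have hs_top : ∀ g : ℝ, ∃ m, (g : EReal) < s m :=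
    hE.exists_lt (fun m => exists_mem_eq_nubarH (remainder_mem_supported hvE huE (hAE m))) hs
  choose y hyE hy using fun j => HahnSeries.exists_limit_of_coeff_stable hE.isPWO
    (fun m => hAE m j) hs_mono hs_top fun m g hg => hA_succ m ▸ hnext_coeff (A m) j g hg
  refine ⟨fun j => ⟨y j, mem_novikovSubring_of_support_subset hEG hE (hyE j)⟩, hyE, ?_⟩
  funext i
  refine Subtype.ext (HahnSeries.ext (funext fun g => ?_))
  obtain ⟨m, hm⟩ := hs_top g
  exact coeff_eq_coeff_sum_smul_apply (fun j i => (huE j i).trans hE0) hm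
    (fun j g' hg' => (hy j m g' ((EReal.coe_le_coe hg').trans_lt hm)).symm) i

end ResiduesSpan

end Approximation

set_option synthInstance.maxHeartbeats 1000000 in
theorem span_lift_general {K : Type*} [CommRing K]
    (G : AddSubgroup ℝ) (n k : ℕ)
    (V : Submodule (NovikovSubring K G) (Fin n → NovikovSubring K G))
    (u : Fin k → (Fin n → NovikovSubring K G))
    (humem : ∀ j, u j ∈ V ∧ 0 ≤ nubarS (u j))
    -- the images `ũ_j` span `Ṽ = V_{≥0}/V_{+}` over `K`:
    (hspan : ∀ v, v ∈ V → 0 ≤ nubarS v → ∃ a : Fin k → K,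
      0 < nubarH (fun i => ((v i : HahnSeries ℝ K)
        - ∑ j, a j • (u j i : HahnSeries ℝ K)))) :
    -- conclusion: `u_1,…,u_k` span `V_{≥0}` over `Λ_K(G)_{≥0}`
    ∀ v, v ∈ V → 0 ≤ nubarS v → ∃ a : Fin k → NovikovSubring K G,
      (∀ j, 0 ≤ nuS (a j)) ∧ v = ∑ j, a j • u j := by
  intro v hv hv0
  obtain ⟨E, hEG, hE0, hE, hxE⟩ := exists_exponent_addSubmonoid
    (Sum.elim v fun p : Fin k × Fin n => u p.1 p.2)
    (Sum.rec (fun i => hv0.trans (iInf_le _ i)) fun p => (humem p.1).2.trans (iInf_le _ p.2))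
  obtain ⟨a, haE, rfl⟩ := ResiduesSpan.exists_eq_sum_smul hspan hv (fun j => (humem j).1)
    (fun i => hxE (.inl i)) (fun j i => hxE (.inr (j, i))) hEG hE0 hE
  exact ⟨a, fun j => zero_le_nuH_iff.2 ((haE j).trans hE0), rfl⟩

set_option synthInstance.maxHeartbeats 1000000 in
/-- if `u_1,…,u_k ∈ V_{≥0}` have images spanning `Ṽ = V_{≥0}/V_{+}`
over `K`, then they span `V_{≥0}` over `Λ_K(G)_{≥0}`. -/
theorem span_lift {K : Type*} [CommRing K] [IsNoetherianRing K]
    (G : AddSubgroup ℝ) (n k : ℕ)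
    (V : Submodule (NovikovSubring K G) (Fin n → NovikovSubring K G))
    (u : Fin k → (Fin n → NovikovSubring K G))
    (humem : ∀ j, u j ∈ V ∧ 0 ≤ nubarS (u j))
    -- the images `ũ_j` span `Ṽ = V_{≥0}/V_{+}` over `K`:
    (hspan : ∀ v, v ∈ V → 0 ≤ nubarS v → ∃ a : Fin k → K,
      0 < nubarH (fun i => ((v i : HahnSeries ℝ K)
        - ∑ j, a j • (u j i : HahnSeries ℝ K)))) :
    -- conclusion: `u_1,…,u_k` span `V_{≥0}` over `Λ_K(G)_{≥0}`
    ∀ v, v ∈ V → 0 ≤ nubarS v → ∃ a : Fin k → NovikovSubring K G,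
      (∀ j, 0 ≤ nuS (a j)) ∧ v = ∑ j, a j • u j :=
  span_lift_general G n k V u humem hspan
end
end

section
/- Let K be a Noetherian ring, A an n×m matrix over Λ_K(G), and t⃗ = (t_1,…,t_n) ∈ ℝ^n. Define ν̄_{t⃗}(a_1,…,a_n) = min_i (ν(a_i) − t_i). Then there is γ ∈ ℝ depending only on t⃗ and A such that for every w ∈ Λ_K(G)^n there exists x_0 ∈ Λ_K(G)^m with ν̄(x_0) ≥ ν̄_{t⃗}(w) − γ and ν̄_{t⃗}(w − A x_0) = sup_{x ∈ Λ_K(G)^m} ν̄_{t⃗}(w − A x). -/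
set_option synthInstance.maxHeartbeats 1000000
set_option maxHeartbeats 1000000
open Classical
noncomputable section

variable {K : Type*} [CommRing K]

variable {G : AddSubgroup ℝ}

/-- The shifted valuation `ν̄_t(a) = min_i (ν(a_i) − t_i)` on vectors. -/
def nubartH {K : Type*} [CommRing K] {n : ℕ} (t : Fin n → ℝ)
    (v : Fin n → HahnSeries ℝ K) : EReal :=
  ⨅ i, (nuH (v i) - ((t i : ℝ) : EReal))

/-- `ν̄_t` on vectors over the Novikov ring. -/
def nubartS {K : Type*} [CommRing K] {G : AddSubgroup ℝ} {n : ℕ} (t : Fin n → ℝ)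
    (v : Fin n → NovikovSubring K G) : EReal :=
  nubartH t fun i => (v i : HahnSeries ℝ K)


/-!
Greedy cancellation of leading terms. Let `v = w - A x` have level `r = ν̄_t(v)`. Some `x'` does
better than `x` exactly when the leading coefficient vector of `v` at level `r` is also that of
some `A y` of level at least `r`. Multiplying by a monomial moves `r` to one of the finitely many
base levels `-t i₀`; there these vectors span a finitely generated `K`-module, `K` being
Noetherian, and fixed preimages of finitely many generators give corrections `u` with
`ν̄(u) ≥ r - γ` for a single constant `γ`.

Iterating, either some approximation admits no correction and is then optimal, or the levels
increase strictly forever. They stay in the shifted support of `w` plus the additive monoid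
generated by the level jumps `D` of the fixed preimages; this set is finite below every bound, so
the levels tend to `∞` and the corrections sum to an exact solution of `A x = w`.
-/

open Filter Topology Pointwise Matrix

def FiniteBelow (X : Set ℝ) : Prop := ∀ C : ℝ, {s ∈ X | s < C}.Finite

namespace FiniteBelow

variable {X Y : Set ℝ}

lemma mono (hY : FiniteBelow Y) (hXY : X ⊆ Y) : FiniteBelow X :=
  fun C => (hY C).subset fun _ hs => ⟨hXY hs.1, hs.2⟩

lemma iUnion {ι : Type*} [Finite ι] {X : ι → Set ℝ} (hX : ∀ i, FiniteBelow (X i)) :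
    FiniteBelow (⋃ i, X i) := fun C =>
  (Set.finite_iUnion fun i => hX i C).subset fun _ ⟨hs, hsC⟩ =>
    Set.mem_iUnion.2 ((Set.mem_iUnion.1 hs).imp fun _ hi => ⟨hi, hsC⟩)

lemma image_add_const (hX : FiniteBelow X) (c : ℝ) : FiniteBelow ((· + c) '' X) := fun C =>
  ((hX (C - c)).image (· + c)).subset fun _ ⟨⟨s, hs, hsc⟩, hC⟩ =>
    ⟨s, ⟨hs, by simp only at hsc; linarith⟩, hsc⟩

lemma bddBelow (hX : FiniteBelow X) : BddBelow X := by
  rcases X.eq_empty_or_nonempty with rfl | ⟨a, -⟩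
  · exact bddBelow_empty
  · refine ((hX a).bddBelow.union (bddBelow_Ici (a := a))).mono fun s hs => ?_
    exact (lt_or_ge s a).imp (⟨hs, ·⟩) id

lemma isPWO (hX : FiniteBelow X) : X.IsPWO := by
  refine Set.IsWF.isPWO (Set.isWF_iff_no_descending_seq.2 fun f hf hmem => ?_)
  refine Set.infinite_of_injective_forall_mem (hf.comp_strictMono (strictMono_id.add_const 1)
    |>.injective) (fun k => ?_) (hX (f 0 + 1))
  exact ⟨hmem _, (hf (Nat.succ_pos k)).trans (lt_add_one _)⟩

lemma exists_pos_le (hX : FiniteBelow X) : ∃ δ > 0, ∀ d ∈ X, 0 < d → δ ≤ d := by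
  set S := insert 1 {d ∈ X | d < 1 ∧ 0 < d}
  have hS : S.Finite := ((hX 1).subset fun d hd => ⟨hd.1, hd.2.1⟩).insert 1
  obtain ⟨δ, hδS, hδ⟩ := Set.exists_min_image S id hS (Set.insert_nonempty _ _)
  refine ⟨δ, hδS.elim (· ▸ one_pos) (·.2.2), fun d hd hd0 => ?_⟩
  rcases lt_or_ge d 1 with hd1 | hd1
  · exact hδ d (Or.inr ⟨hd, hd1, hd0⟩)
  · exact (hδ 1 (Set.mem_insert 1 _)).trans hd1

lemma add (hX : FiniteBelow X) (hY : FiniteBelow Y) : FiniteBelow (X + Y) := by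
  obtain ⟨a, ha⟩ := hX.bddBelow
  obtain ⟨b, hb⟩ := hY.bddBelow
  intro C
  refine ((hX (C - b)).add (hY (C - a))).subset ?_
  rintro _ ⟨⟨x, hx, y, hy, rfl⟩, hC⟩
  have := ha hx
  have := hb hy
  exact Set.add_mem_add ⟨hx, by linarith⟩ ⟨hy, by linarith⟩

lemma addSubmonoid_closure {D : Set ℝ} (hD : FiniteBelow D) (hD0 : ∀ d ∈ D, 0 ≤ d) :
    FiniteBelow (AddSubmonoid.closure D) := by
  obtain ⟨δ, hδ, hδD⟩ := hD.exists_pos_le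
  intro C
  set F := insert 0 {d ∈ D | d < C}
  have hF (k : ℕ) : (k • F).Finite := by
    induction k with
    | zero => simp
    | succ k ih => rw [succ_nsmul]; exact ih.add ((hD C).insert 0)
  -- a sum below `C` has at most `C / δ` nonzero terms, all taken from the finite set `F`
  have key : ∀ s ∈ AddSubmonoid.closure D,
      0 ≤ s ∧ (s < C → ∃ k : ℕ, k * δ ≤ s ∧ s ∈ k • F) := by
    intro s hs
    induction hs using AddSubmonoid.closure_induction with
    | mem d hd =>
      refine ⟨hD0 d hd, fun hdC => ?_⟩
      rcases (hD0 d hd).eq_or_lt with rfl | hd0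
      · exact ⟨0, by simp, by simp⟩
      · exact ⟨1, by simpa using hδD d hd hd0, by simpa [F] using Or.inr ⟨hd, hdC⟩⟩
    | zero => exact ⟨le_rfl, fun _ => ⟨0, by simp, by simp⟩⟩
    | add a b _ _ ha hb =>
      refine ⟨add_nonneg ha.1 hb.1, fun hab => ?_⟩
      obtain ⟨k, hk, hka⟩ := ha.2 (by linarith [hb.1])
      obtain ⟨l, hl, hlb⟩ := hb.2 (by linarith [ha.1])
      exact ⟨k + l, by push_cast; linarith, add_nsmul F k l ▸ Set.add_mem_add hka hlb⟩
  refine (Set.finite_Iic ⌈C / δ⌉₊ |>.biUnion fun k _ => hF k).subset fun s ⟨hs, hsC⟩ => ?_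
  obtain ⟨k, hk, hks⟩ := (key s hs).2 hsC
  have hkC : (k : ℝ) ≤ ⌈C / δ⌉₊ := ((le_div_iff₀ hδ).2 (by linarith)).trans (Nat.le_ceil _)
  exact Set.mem_biUnion (Set.mem_Iic.2 (mod_cast hkC)) hks

end FiniteBelow

lemma HahnSeries.coeff_mul_eq_zero_of_lt {Γ R : Type*} [AddCommMonoid Γ] [LinearOrder Γ]
    [IsOrderedCancelAddMonoid Γ] [NonUnitalNonAssocSemiring R] {a b : HahnSeries Γ R}
    {α β s : Γ} (ha : ∀ u < α, a.coeff u = 0) (hb : ∀ u < β, b.coeff u = 0) (hs : s < α + β) :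
    (a * b).coeff s = 0 := by
  rw [HahnSeries.coeff_mul]
  refine Finset.sum_eq_zero fun ⟨u, v⟩ huv => ?_
  obtain ⟨-, -, rfl⟩ := Finset.mem_antidiagonal.1 huv
  rcases lt_or_ge u α with h | h
  · simp [ha u h]
  · simp [hb v (lt_of_add_lt_add_left (hs.trans_le (add_le_add_left h β)))]

lemma EReal.tendsto_sub_coe_nhds_top {α : Type*} {l : Filter α} {f : α → EReal}
    (h : Tendsto f l (𝓝 ⊤)) (c : ℝ) : Tendsto (fun a => f a - c) l (𝓝 ⊤) := by
  rw [EReal.tendsto_nhds_top_iff_real] at h ⊢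
  refine fun C => (h (C + c)).mono fun a ha => ?_
  rwa [EReal.lt_sub_iff_add_lt (by simp) (by simp), ← EReal.coe_add]

namespace Novikov

section Coefficients

variable {ι : Type*}

lemma finiteBelow_support (x : NovikovSubring K G) : FiniteBelow (x : HahnSeries ℝ K).support :=
  x.2.2

lemma exists_forall_coeff_eq_zero_of_lt [Finite ι] (x : ι → NovikovSubring K G) :
    ∃ ρ : ℝ, ∀ i, ∀ s < ρ, (x i : HahnSeries ℝ K).coeff s = 0 := by
  obtain ⟨ρ, hρ⟩ := (FiniteBelow.iUnion fun i => finiteBelow_support (x i)).bddBelow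
  exact ⟨ρ, fun i s hs => by_contra fun h => (hρ (Set.mem_iUnion.2 ⟨i, h⟩)).not_gt hs⟩

def monomial (g : ℝ) (hg : g ∈ G) (κ : K) : NovikovSubring K G :=
  ⟨HahnSeries.single g κ, fun _ hs => by rwa [HahnSeries.support_single_subset hs],
    fun _ => (Set.finite_singleton g).subset fun _ hs => HahnSeries.support_single_subset hs.1⟩

def entryCoeff (i : ι) (s : ℝ) : (ι → NovikovSubring K G) →+ K :=
  (HahnSeries.coeff.addMonoidHom s).comp
    ((NovikovSubring K G).subtype.toAddMonoidHom.comp (Pi.evalAddMonoidHom _ i))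

@[simp]
lemma entryCoeff_apply (i : ι) (s : ℝ) (v : ι → NovikovSubring K G) :
    entryCoeff i s v = (v i : HahnSeries ℝ K).coeff s := rfl

lemma entryCoeff_monomial_smul {g : ℝ} (hg : g ∈ G) (κ : K) (v : ι → NovikovSubring K G)
    (i : ι) (s : ℝ) :
    entryCoeff i s (monomial g hg κ • v) = κ * entryCoeff i (s - g) v := by
  show (HahnSeries.single g κ * (v i : HahnSeries ℝ K)).coeff s
    = κ * (v i : HahnSeries ℝ K).coeff (s - g)
  rw [← HahnSeries.coeff_single_mul_add (b := g), sub_add_cancel]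

lemma entryCoeff_sum_monomial_smul {κ : Type*} {g : ℝ} (hg : g ∈ G) (W : Finset κ)
    (f : κ → K) (z : κ → ι → NovikovSubring K G) (i : ι) (s : ℝ) :
    entryCoeff i s (∑ y ∈ W, monomial g hg (f y) • z y)
      = ∑ y ∈ W, f y * entryCoeff i (s - g) (z y) := by
  rw [map_sum]
  simp only [entryCoeff_monomial_smul]

lemma entryCoeff_mulVec {n m : ℕ} (A : Matrix (Fin n) (Fin m) (NovikovSubring K G))
    (y : Fin m → NovikovSubring K G) (i : Fin n) (s : ℝ) :
    entryCoeff i s (A *ᵥ y) = ∑ j, ((A i j : HahnSeries ℝ K) * y j).coeff s := by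
  simp [Matrix.mulVec, dotProduct]

def shiftedSupport (t : ι → ℝ) (v : ι → NovikovSubring K G) : Set ℝ :=
  {s | ∃ i, entryCoeff i (s + t i) v ≠ 0}

lemma mem_G_of_mem_shiftedSupport {t : ι → ℝ} {v : ι → NovikovSubring K G} {r : ℝ}
    (h : r ∈ shiftedSupport t v) : ∃ i, r + t i ∈ G :=
  h.imp fun i hi => (v i).2.1 hi

lemma finiteBelow_shiftedSupport [Finite ι] (t : ι → ℝ) (v : ι → NovikovSubring K G) :
    FiniteBelow (shiftedSupport t v) := by
  refine (FiniteBelow.iUnion fun i =>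
    (finiteBelow_support (v i)).image_add_const (-t i)).mono ?_
  rintro s ⟨i, hi⟩
  exact Set.mem_iUnion.2 ⟨i, s + t i, hi, by simp⟩

lemma shiftedSupport_sub_subset (t : ι → ℝ) (v v' : ι → NovikovSubring K G) :
    shiftedSupport t (v - v') ⊆ shiftedSupport t v ∪ shiftedSupport t v' := by
  rintro s ⟨i, hi⟩
  rw [map_sub] at hi
  by_cases h : entryCoeff i (s + t i) v = 0
  · exact Or.inr ⟨i, fun h' => hi (by rw [h, h', sub_zero])⟩
  · exact Or.inl ⟨i, h⟩

end Coefficients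

section Valuations

lemma coe_le_nuH_iff {x : HahnSeries ℝ K} {r : ℝ} :
    (r : EReal) ≤ nuH x ↔ ∀ s < r, x.coeff s = 0 := by
  unfold nuH
  split_ifs with hx
  · simp [hx]
  · rw [EReal.coe_le_coe_iff]
    refine ⟨fun h s hs => HahnSeries.coeff_eq_zero_of_lt_order (hs.trans_le h), fun h => ?_⟩
    by_contra! hlt
    exact mt HahnSeries.coeff_order_eq_zero.1 hx (h _ hlt)

variable {n m : ℕ} {t : Fin n → ℝ} {v : Fin n → NovikovSubring K G} {r : ℝ}

lemma coe_le_nubartS_iff :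
    (r : EReal) ≤ nubartS t v ↔ ∀ i, ∀ s < r + t i, entryCoeff i s v = 0 := by
  simp only [nubartS, nubartH, le_iInf_iff]
  refine forall_congr' fun i => ?_
  rw [EReal.le_sub_iff_add_le (by simp) (by simp), ← EReal.coe_add, coe_le_nuH_iff]
  rfl

lemma coe_le_nubarS_iff {x : Fin m → NovikovSubring K G} :
    (r : EReal) ≤ nubarS x ↔ ∀ j, ∀ s < r, entryCoeff j s x = 0 := by
  have : nubarS x = nubartS 0 x := by simp [nubarS, nubarH, nubartS, nubartH]
  simp [this, coe_le_nubartS_iff]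

lemma nubartS_zero : nubartS t (0 : Fin n → NovikovSubring K G) = ⊤ := by
  simp [nubartS, nubartH, nuH]

lemma nubarS_zero : nubarS (0 : Fin m → NovikovSubring K G) = ⊤ := by
  simp [nubarS, nubarH, nuH]

lemma nubartS_le_of_mem_shiftedSupport (h : r ∈ shiftedSupport t v) : nubartS t v ≤ r := by
  obtain ⟨i, hi⟩ := h
  by_contra! hlt
  obtain ⟨r', hr, hr'⟩ := EReal.lt_iff_exists_real_btwn.1 hlt
  exact hi (coe_le_nubartS_iff.1 hr'.le i _ (by linarith [EReal.coe_lt_coe_iff.1 hr]))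

lemma le_of_mem_shiftedSupport (hr : (r : EReal) ≤ nubartS t v) {s : ℝ}
    (hs : s ∈ shiftedSupport t v) : r ≤ s :=
  EReal.coe_le_coe_iff.1 (hr.trans (nubartS_le_of_mem_shiftedSupport hs))

lemma exists_nubartS_eq_coe (hv : v ≠ 0) :
    ∃ r : ℝ, nubartS t v = r ∧ r ∈ shiftedSupport t v := by
  have hne : (Finset.univ.filter fun i => v i ≠ 0).Nonempty := by
    obtain ⟨i, hi⟩ := Function.ne_iff.1 hv
    exact ⟨i, by simpa using hi⟩
  obtain ⟨i₀, hi₀, hmin⟩ := Finset.exists_min_image _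
    (fun i => (v i : HahnSeries ℝ K).order - t i) hne
  have hv₀ : (v i₀ : HahnSeries ℝ K) ≠ 0 := by simpa using hi₀
  have hmem : (v i₀ : HahnSeries ℝ K).order - t i₀ ∈ shiftedSupport t v :=
    ⟨i₀, by simpa using mt HahnSeries.coeff_order_eq_zero.1 hv₀⟩
  refine ⟨_, le_antisymm (nubartS_le_of_mem_shiftedSupport hmem) ?_, hmem⟩
  refine coe_le_nubartS_iff.2 fun i s hs => ?_
  by_cases hvi : v i = 0
  · simp [hvi]
  · have := hmin i (by simpa using hvi)
    exact HahnSeries.coeff_eq_zero_of_lt_order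
      (show s < (v i : HahnSeries ℝ K).order by linarith)

lemma coe_lt_nubartS_iff :
    (r : EReal) < nubartS t v ↔ (r : EReal) ≤ nubartS t v ∧ r ∉ shiftedSupport t v := by
  refine ⟨fun h => ⟨h.le, fun hr => (nubartS_le_of_mem_shiftedSupport hr).not_gt h⟩,
    fun ⟨hle, hr⟩ => hle.lt_of_ne fun heq => hr ?_⟩
  have hv : v ≠ 0 := by rintro rfl; simp [nubartS_zero] at heq
  obtain ⟨r', hr', hmem⟩ := exists_nubartS_eq_coe (t := t) hv
  rw [← heq, EReal.coe_eq_coe_iff] at hr'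
  exact hr' ▸ hmem

lemma min_le_nubartS_sub (t : Fin n → ℝ) (v v' : Fin n → NovikovSubring K G) :
    min (nubartS t v) (nubartS t v') ≤ nubartS t (v - v') := by
  refine EReal.ge_of_forall_gt_iff_ge.1 fun z hz => coe_le_nubartS_iff.2 fun i s hs => ?_
  rw [lt_min_iff] at hz
  rw [map_sub, coe_le_nubartS_iff.1 hz.1.le i s hs, coe_le_nubartS_iff.1 hz.2.le i s hs,
    sub_zero]

lemma min_le_nubarS_add (x x' : Fin m → NovikovSubring K G) :
    min (nubarS x) (nubarS x') ≤ nubarS (x + x') := by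
  refine EReal.ge_of_forall_gt_iff_ge.1 fun z hz => coe_le_nubarS_iff.2 fun i s hs => ?_
  rw [lt_min_iff] at hz
  rw [map_add, coe_le_nubarS_iff.1 hz.1.le i s hs, coe_le_nubarS_iff.1 hz.2.le i s hs, add_zero]

lemma exists_sub_le_nubartS_mulVec (A : Matrix (Fin n) (Fin m) (NovikovSubring K G))
    (t : Fin n → ℝ) : ∃ β : ℝ, ∀ y, nubarS y - β ≤ nubartS t (A *ᵥ y) := by
  obtain ⟨α, hα⟩ := exists_forall_coeff_eq_zero_of_lt fun p : Fin n × Fin m => A p.1 p.2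
  obtain ⟨M, hM⟩ := (Set.finite_range t).bddAbove
  refine ⟨M - α, fun y => EReal.ge_of_forall_gt_iff_ge.1 fun z hz => ?_⟩
  rw [EReal.lt_sub_iff_add_lt (by simp) (by simp), ← EReal.coe_add] at hz
  refine coe_le_nubartS_iff.2 fun i s hs => ?_
  have := hM ⟨i, rfl⟩
  rw [entryCoeff_mulVec]
  exact Finset.sum_eq_zero fun j _ => HahnSeries.coeff_mul_eq_zero_of_lt (hα (i, j))
    (coe_le_nubarS_iff.1 hz.le j) (by linarith)

end Valuations

section Summation

lemma exists_tendsto_nuS_sub_sum (u : ℕ → NovikovSubring K G)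
    (hu : Tendsto (fun l => nuS (u l)) atTop (𝓝 ⊤)) :
    ∃ x, Tendsto (fun k => nuS (x - ∑ l ∈ Finset.range k, u l)) atTop (𝓝 ⊤) := by
  have hu' : ∀ C : ℝ, ∃ N, ∀ l ≥ N, ∀ s < C, (u l : HahnSeries ℝ K).coeff s = 0 := fun C =>
    eventually_atTop.1 ((EReal.tendsto_nhds_top_iff_real.1 hu C).mono fun l hl =>
      coe_le_nuH_iff.1 hl.le)
  have hfin (s : ℝ) : {l | (u l : HahnSeries ℝ K).coeff s ≠ 0}.Finite := by
    obtain ⟨N, hN⟩ := hu' (s + 1)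
    exact (Set.finite_lt_nat N).subset fun l hl => not_le.1 fun h => hl (hN l h s (lt_add_one s))
  have hFB : FiniteBelow (⋃ l, (u l : HahnSeries ℝ K).support) := by
    intro C
    obtain ⟨N, hN⟩ := hu' C
    refine (Set.finite_Iio N |>.biUnion fun l _ => finiteBelow_support (u l) C).subset ?_
    rintro s ⟨hs, hsC⟩
    obtain ⟨l, hl⟩ := Set.mem_iUnion.1 hs
    exact Set.mem_biUnion (Set.mem_Iio.2 (not_le.1 fun h => hl (hN l h s hsC))) ⟨hl, hsC⟩
  let F : HahnSeries.SummableFamily ℝ K ℕ := ⟨fun l => u l, hFB.isPWO, hfin⟩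
  refine ⟨⟨F.hsum, fun s hs => ?_, hFB.mono HahnSeries.SummableFamily.support_hsum_subset⟩,
    EReal.tendsto_nhds_top_iff_real.2 fun C => ?_⟩
  · obtain ⟨_, ⟨l, rfl⟩, hl⟩ := HahnSeries.SummableFamily.support_hsum_subset hs
    exact (u l).2.1 hl
  obtain ⟨N, hN⟩ := hu' (C + 1)
  refine eventually_atTop.2 ⟨N, fun k hk => ?_⟩
  refine (EReal.coe_lt_coe_iff.2 (lt_add_one C)).trans_le (coe_le_nuH_iff.2 fun s hs => ?_)
  have : F.hsum.coeff s = ∑ l ∈ Finset.range k, (u l : HahnSeries ℝ K).coeff s := by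
    rw [HahnSeries.SummableFamily.coeff_hsum]
    refine finsum_eq_sum_of_support_subset _ fun l hl => Finset.mem_range.2 ?_
    exact not_le.1 fun h => hl (hN l (hk.trans h) s hs)
  simpa [sub_eq_zero] using this

lemma exists_tendsto_nubarS_sub_sum {m : ℕ} (u : ℕ → Fin m → NovikovSubring K G)
    (hu : Tendsto (fun l => nubarS (u l)) atTop (𝓝 ⊤)) :
    ∃ x, Tendsto (fun k => nubarS (x - ∑ l ∈ Finset.range k, u l)) atTop (𝓝 ⊤) := by
  have hle (y : Fin m → NovikovSubring K G) (j : Fin m) : nubarS y ≤ nuS (y j) := iInf_le _ j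
  choose x hx using fun j => exists_tendsto_nuS_sub_sum (fun l => u l j)
    (tendsto_nhds_top_mono hu (Eventually.of_forall fun l => hle (u l) j))
  refine ⟨x, EReal.tendsto_nhds_top_iff_real.2 fun C => ?_⟩
  filter_upwards [eventually_all.2 fun j => EReal.tendsto_nhds_top_iff_real.1 (hx j) (C + 1)]
    with k hk
  refine (EReal.coe_lt_coe_iff.2 (lt_add_one C)).trans_le (le_iInf fun j => ?_)
  simpa [nuS, Finset.sum_apply] using (hk j).le

end Summation

section Cancellation

variable {n m : ℕ} (A : Matrix (Fin n) (Fin m) (NovikovSubring K G)) (t : Fin n → ℝ)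

def leadVec (r : ℝ) : (Fin n → NovikovSubring K G) →+ (Fin n → K) :=
  AddMonoidHom.pi fun i => entryCoeff i (r + t i)

lemma leadVec_apply (r : ℝ) (v : Fin n → NovikovSubring K G) (i : Fin n) :
    leadVec t r v i = entryCoeff i (r + t i) v := rfl

lemma leadVec_eq_zero_iff {r : ℝ} {v : Fin n → NovikovSubring K G} :
    leadVec t r v = 0 ↔ r ∉ shiftedSupport t v := by
  simp [funext_iff, leadVec_apply, shiftedSupport]

/-- The level `r` of a nonzero vector has `r + t i₀ ∈ G` for some `i₀`, so a monomial moves it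
to the base level `-t i₀`: these sets record the leading terms achievable by `A` at all levels. -/
def leadSet (i₀ : Fin n) : Set (Fin n → K) :=
  (fun y => leadVec t (-t i₀) (A *ᵥ y)) '' {y | ((-t i₀ : ℝ) : EReal) ≤ nubartS t (A *ᵥ y)}

variable {A t} in
lemma leadVec_mem_leadSet {r : ℝ} {i₀ : Fin n} (hg : r + t i₀ ∈ G)
    {y : Fin m → NovikovSubring K G} (hy : (r : EReal) ≤ nubartS t (A *ᵥ y)) :
    leadVec t r (A *ᵥ y) ∈ leadSet A t i₀ := by
  have hA := Matrix.mulVec_smul A (monomial (-(r + t i₀)) (G.neg_mem hg) (1 : K)) y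
  refine ⟨monomial (-(r + t i₀)) (G.neg_mem hg) (1 : K) • y, ?_, funext fun i => ?_⟩
  · refine coe_le_nubartS_iff.2 fun i s hs => ?_
    rw [hA, entryCoeff_monomial_smul, coe_le_nubartS_iff.1 hy i _ (by linarith), mul_zero]
  · simp only [leadVec_apply, hA, entryCoeff_monomial_smul, one_mul]
    ring_nf

lemma exists_finset_leadSet_subset_span [IsNoetherianRing K] (i₀ : Fin n) :
    ∃ W : Finset (Fin m → NovikovSubring K G),
      (∀ y ∈ W, ((-t i₀ : ℝ) : EReal) ≤ nubartS t (A *ᵥ y)) ∧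
      leadSet A t i₀ ⊆ Submodule.span K ((fun y => leadVec t (-t i₀) (A *ᵥ y)) '' W) := by
  obtain ⟨s, hs, hspan⟩ := (Submodule.fg_span_iff_fg_span_finset_subset (leadSet A t i₀)).1
    (IsNoetherian.noetherian (R := K) _)
  obtain ⟨W, hW, rfl⟩ := Finset.subset_set_image_iff.1 hs
  refine ⟨W, fun y hy => hW hy, ?_⟩
  rw [← Finset.coe_image, ← hspan]
  exact Submodule.subset_span

theorem exists_uniform_cancel [IsNoetherianRing K] :
    ∃ γ : ℝ, ∃ D : Set ℝ, FiniteBelow D ∧ (∀ d ∈ D, 0 ≤ d) ∧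
      ∀ (r : ℝ) (i₀ : Fin n), r + t i₀ ∈ G → ∀ c ∈ leadSet A t i₀,
        ∃ u : Fin m → NovikovSubring K G, (r : EReal) ≤ nubartS t (A *ᵥ u) ∧
          leadVec t r (A *ᵥ u) = c ∧ ((r - γ : ℝ) : EReal) ≤ nubarS u ∧
          shiftedSupport t (A *ᵥ u) ⊆ (r + ·) '' D := by
  choose W hWge hWspan using exists_finset_leadSet_subset_span A t
  obtain ⟨ρ, hρ⟩ := exists_forall_coeff_eq_zero_of_lt
    fun p : (Σ i₀, W i₀) × Fin m => (p.1.2 : Fin m → NovikovSubring K G) p.2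
  obtain ⟨μ, hμ⟩ := (Set.finite_range t).bddBelow
  refine ⟨-μ - ρ, ⋃ i₀, ⋃ y : W i₀, (· + t i₀) '' shiftedSupport t (A *ᵥ y), ?_, ?_, ?_⟩
  · exact FiniteBelow.iUnion fun i₀ => FiniteBelow.iUnion fun y =>
      (finiteBelow_shiftedSupport _ _).image_add_const _
  · simp only [Set.mem_iUnion, Set.mem_image]
    rintro _ ⟨i₀, y, s, hs, rfl⟩
    linarith [le_of_mem_shiftedSupport (hWge i₀ y y.2) hs]
  intro r i₀ hg c hc
  obtain ⟨f, rfl⟩ := (Submodule.mem_span_image_finset_iff_exists_fun' K).1 (hWspan i₀ hc)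
  have hAu : A *ᵥ (∑ y ∈ W i₀, monomial (r + t i₀) hg (f y) • y)
      = ∑ y ∈ W i₀, monomial (r + t i₀) hg (f y) • A *ᵥ y := by
    simp only [Matrix.mulVec_sum, Matrix.mulVec_smul]
  refine ⟨∑ y ∈ W i₀, monomial (r + t i₀) hg (f y) • y, ?_, ?_, ?_, ?_⟩
  · refine coe_le_nubartS_iff.2 fun i s hs => ?_
    rw [hAu, entryCoeff_sum_monomial_smul]
    refine Finset.sum_eq_zero fun y hy => ?_
    rw [coe_le_nubartS_iff.1 (hWge i₀ y hy) i _ (by linarith), mul_zero]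
  · funext i
    simp only [leadVec_apply, hAu, entryCoeff_sum_monomial_smul, Finset.sum_apply,
      Pi.smul_apply, smul_eq_mul]
    refine Finset.sum_congr rfl fun y _ => ?_
    ring_nf
  · refine coe_le_nubarS_iff.2 fun j s hs => ?_
    rw [entryCoeff_sum_monomial_smul]
    refine Finset.sum_eq_zero fun y hy => ?_
    rw [entryCoeff_apply, hρ (⟨i₀, y, hy⟩, j) _ (by linarith [hμ ⟨i₀, rfl⟩]), mul_zero]
  · rintro s ⟨i, hi⟩
    rw [hAu, entryCoeff_sum_monomial_smul] at hi
    obtain ⟨y, hy, hne⟩ := Finset.exists_ne_zero_of_sum_ne_zero hi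
    refine ⟨s - r, Set.mem_iUnion.2 ⟨i₀, Set.mem_iUnion.2 ⟨⟨y, hy⟩, s - r - t i₀, ⟨i, ?_⟩,
      by ring⟩⟩, by ring⟩
    exact fun h => hne (by
      rw [show s + t i - (r + t i₀) = s - r - t i₀ + t i by ring, h, mul_zero])

/-- The last condition keeps all levels of the greedy process inside
`shiftedSupport t w + AddSubmonoid.closure D`, which is finite below every bound. -/
def IsCorrection (γ : ℝ) (D : Set ℝ) (v : Fin n → NovikovSubring K G)
    (u : Fin m → NovikovSubring K G) : Prop :=
  nubartS t v < nubartS t (v - A *ᵥ u) ∧ nubartS t v - γ ≤ nubarS u ∧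
    shiftedSupport t (A *ᵥ u) ⊆ shiftedSupport t v + D

theorem exists_isCorrection_of_lt [IsNoetherianRing K] :
    ∃ γ : ℝ, ∃ D : Set ℝ, FiniteBelow D ∧ (∀ d ∈ D, 0 ≤ d) ∧
      ∀ w x x', nubartS t (w - A *ᵥ x) < nubartS t (w - A *ᵥ x') →
        ∃ u, IsCorrection A t γ D (w - A *ᵥ x) u := by
  obtain ⟨γ, D, hD, hD0, hcancel⟩ := exists_uniform_cancel A t
  refine ⟨γ, D, hD, hD0, fun w x x' hlt => ?_⟩
  have hv : w - A *ᵥ x ≠ 0 := fun hv => by simp [hv, nubartS_zero] at hlt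
  obtain ⟨r, hr, hrv⟩ := exists_nubartS_eq_coe (t := t) hv
  obtain ⟨i₀, hg⟩ := mem_G_of_mem_shiftedSupport hrv
  rw [hr, coe_lt_nubartS_iff, ← leadVec_eq_zero_iff] at hlt
  have hAy : A *ᵥ (x' - x) = (w - A *ᵥ x) - (w - A *ᵥ x') := by
    rw [Matrix.mulVec_sub]; abel
  have hge : (r : EReal) ≤ nubartS t (A *ᵥ (x' - x)) :=
    hAy ▸ (le_min hr.ge hlt.1).trans (min_le_nubartS_sub t _ _)
  have hlead : leadVec t r (A *ᵥ (x' - x)) = leadVec t r (w - A *ᵥ x) := by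
    rw [hAy, map_sub, hlt.2, sub_zero]
  obtain ⟨u, hu, hlead_u, hval_u, hsupp_u⟩ :=
    hcancel r i₀ hg _ (hlead ▸ leadVec_mem_leadSet hg hge)
  refine ⟨u, ?_, ?_, fun s hs => ?_⟩
  · rw [hr, coe_lt_nubartS_iff, ← leadVec_eq_zero_iff, map_sub, hlead_u, sub_self]
    exact ⟨(le_min hr.ge hu).trans (min_le_nubartS_sub t _ _), rfl⟩
  · rwa [hr, ← EReal.coe_sub]
  · obtain ⟨d, hd, rfl⟩ := hsupp_u hs
    exact Set.add_mem_add hrv hd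

end Cancellation

section Greedy

variable {n m : ℕ} (A : Matrix (Fin n) (Fin m) (NovikovSubring K G)) (t : Fin n → ℝ) (γ : ℝ)
  (D : Set ℝ) (w : Fin n → NovikovSubring K G)

def greedyStep (x : Fin m → NovikovSubring K G) : Fin m → NovikovSubring K G :=
  if h : ∃ u, IsCorrection A t γ D (w - A *ᵥ x) u then x + h.choose else x

def greedy (k : ℕ) : Fin m → NovikovSubring K G := (greedyStep A t γ D w)^[k] 0

variable {A t γ D w}

lemma greedy_succ (k : ℕ) :
    greedy A t γ D w (k + 1) = greedyStep A t γ D w (greedy A t γ D w k) :=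
  Function.iterate_succ_apply' _ _ _

lemma isCorrection_greedy {k : ℕ}
    (h : ∃ u, IsCorrection A t γ D (w - A *ᵥ greedy A t γ D w k) u) :
    IsCorrection A t γ D (w - A *ᵥ greedy A t γ D w k)
      (greedy A t γ D w (k + 1) - greedy A t γ D w k) := by
  rw [greedy_succ, greedyStep, dif_pos h, add_sub_cancel_left]
  exact h.choose_spec

lemma greedy_succ_of_not_exists {k : ℕ}
    (h : ¬ ∃ u, IsCorrection A t γ D (w - A *ᵥ greedy A t γ D w k) u) :
    greedy A t γ D w (k + 1) = greedy A t γ D w k := by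
  rw [greedy_succ, greedyStep, dif_neg h]

lemma residual_greedy_succ (k : ℕ) :
    w - A *ᵥ greedy A t γ D w (k + 1) = (w - A *ᵥ greedy A t γ D w k)
      - A *ᵥ (greedy A t γ D w (k + 1) - greedy A t γ D w k) := by
  rw [Matrix.mulVec_sub]; abel

lemma monotone_nubartS_residual_greedy :
    Monotone fun k => nubartS t (w - A *ᵥ greedy A t γ D w k) := by
  refine monotone_nat_of_le_succ fun k => ?_
  by_cases h : ∃ u, IsCorrection A t γ D (w - A *ᵥ greedy A t γ D w k) u
  · rw [residual_greedy_succ]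
    exact (isCorrection_greedy h).1.le
  · rw [greedy_succ_of_not_exists h]

lemma nubartS_sub_le_nubarS_greedy (k : ℕ) :
    nubartS t w - γ ≤ nubarS (greedy A t γ D w k) := by
  induction k with
  | zero => simp [greedy, nubarS_zero]
  | succ k ih =>
    by_cases h : ∃ u, IsCorrection A t γ D (w - A *ᵥ greedy A t γ D w k) u
    · have hw : nubartS t (w - A *ᵥ greedy A t γ D w 0)
          ≤ nubartS t (w - A *ᵥ greedy A t γ D w k) :=
        monotone_nubartS_residual_greedy (Nat.zero_le k)
      have hu := (EReal.sub_le_sub (by simpa [greedy] using hw) le_rfl).trans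
        (isCorrection_greedy h).2.1
      have := min_le_nubarS_add (greedy A t γ D w k)
        (greedy A t γ D w (k + 1) - greedy A t γ D w k)
      rw [add_sub_cancel] at this
      exact (le_min ih hu).trans this
    · rwa [greedy_succ_of_not_exists h]

lemma shiftedSupport_residual_greedy_subset (k : ℕ) :
    shiftedSupport t (w - A *ᵥ greedy A t γ D w k)
      ⊆ shiftedSupport t w + AddSubmonoid.closure D := by
  induction k with
  | zero =>
    intro s hs
    exact ⟨s, by simpa [greedy] using hs, 0, zero_mem _, add_zero s⟩
  | succ k ih =>
    by_cases h : ∃ u, IsCorrection A t γ D (w - A *ᵥ greedy A t γ D w k) u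
    · rw [residual_greedy_succ]
      refine (shiftedSupport_sub_subset _ _ _).trans (Set.union_subset ih ?_)
      refine (isCorrection_greedy h).2.2.trans ?_
      rintro _ ⟨_, hs, d, hd, rfl⟩
      obtain ⟨b, hb, c, hc, rfl⟩ := ih hs
      exact ⟨b, hb, c + d, add_mem hc (AddSubmonoid.subset_closure hd), by ring⟩
    · rwa [greedy_succ_of_not_exists h]

lemma tendsto_nubartS_residual_greedy (hD : FiniteBelow D) (hD0 : ∀ d ∈ D, 0 ≤ d)
    (h : ∀ k, ∃ u, IsCorrection A t γ D (w - A *ᵥ greedy A t γ D w k) u) :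
    Tendsto (fun k => nubartS t (w - A *ᵥ greedy A t γ D w k)) atTop (𝓝 ⊤) := by
  set f := fun k => nubartS t (w - A *ᵥ greedy A t γ D w k)
  have hf : StrictMono f := strictMono_nat_of_lt_succ fun k => by
    simpa only [f, residual_greedy_succ] using (isCorrection_greedy (h k)).1
  refine EReal.tendsto_nhds_top_iff_real.2 fun C => ?_
  by_contra hC
  have hle (k : ℕ) : f k ≤ C := not_lt.1 fun hk =>
    hC (eventually_atTop.2 ⟨k, fun l hl => hk.trans_le (hf.monotone hl)⟩)
  have hv (k : ℕ) : w - A *ᵥ greedy A t γ D w k ≠ 0 := fun h0 => by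
    simpa [f, h0, nubartS_zero] using hle k
  -- the levels are distinct points of `shiftedSupport t w + closure D`, finite below `C + 1`
  choose r hr hrs using fun k => exists_nubartS_eq_coe (t := t) (hv k)
  have hrmono : StrictMono r := fun k l hkl => EReal.coe_lt_coe_iff.1 (by
    rw [← hr, ← hr]; exact hf hkl)
  refine Set.infinite_of_injective_forall_mem hrmono.injective (fun k => ?_)
    ((finiteBelow_shiftedSupport t w).add (hD.addSubmonoid_closure hD0) (C + 1))
  have : r k ≤ C := EReal.coe_le_coe_iff.1 (hr k ▸ hle k)
  exact ⟨shiftedSupport_residual_greedy_subset k (hrs k), by linarith⟩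

lemma exists_nubartS_eq_top_of_forall_isCorrection (hD : FiniteBelow D)
    (hD0 : ∀ d ∈ D, 0 ≤ d)
    (h : ∀ k, ∃ u, IsCorrection A t γ D (w - A *ᵥ greedy A t γ D w k) u) :
    ∃ y, nubartS t (w - A *ᵥ y) = ⊤ ∧ nubartS t w - γ ≤ nubarS y := by
  set x := greedy A t γ D w
  have hres := tendsto_nubartS_residual_greedy hD hD0 h
  have hu : Tendsto (fun l => nubarS (x (l + 1) - x l)) atTop (𝓝 ⊤) :=
    tendsto_nhds_top_mono (EReal.tendsto_sub_coe_nhds_top hres γ)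
      (Eventually.of_forall fun l => (isCorrection_greedy (h l)).2.1)
  obtain ⟨y, hy⟩ := exists_tendsto_nubarS_sub_sum _ hu
  simp only [Finset.sum_range_sub, show x 0 = 0 from rfl, sub_zero] at hy
  obtain ⟨β, hβ⟩ := exists_sub_le_nubartS_mulVec A t
  have hAy : Tendsto (fun k => nubartS t (A *ᵥ (y - x k))) atTop (𝓝 ⊤) :=
    tendsto_nhds_top_mono (EReal.tendsto_sub_coe_nhds_top hy β)
      (Eventually.of_forall fun k => hβ _)
  refine ⟨y, top_le_iff.1 (le_of_tendsto' (by simpa using hres.min hAy) fun k => ?_),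
    le_of_tendsto' (by simpa using tendsto_const_nhds.min hy) fun k => ?_⟩
  · have : w - A *ᵥ y = (w - A *ᵥ x k) - A *ᵥ (y - x k) := by rw [Matrix.mulVec_sub]; abel
    exact this ▸ min_le_nubartS_sub t _ _
  · have := min_le_nubarS_add (x k) (y - x k)
    rw [add_sub_cancel] at this
    exact (min_le_min_right _ (nubartS_sub_le_nubarS_greedy k)).trans this

end Greedy

end Novikov

open Novikov

set_option synthInstance.maxHeartbeats 1000000 in
/-- main algebraic theorem: for a matrix `A` over `Λ_K(G)` with
`K` Noetherian and any `t ∈ ℝ^n` there is `γ ∈ ℝ` such that every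
`w ∈ Λ_K(G)^n` admits `x₀ ∈ Λ_K(G)^m` with `ν̄(x₀) ≥ ν̄_t(w) − γ` and
`ν̄_t(w − A x₀) = sup_x ν̄_t(w − A x)`. -/
theorem best_approximation_shifted {K : Type*} [CommRing K] [IsNoetherianRing K]
    (G : AddSubgroup ℝ) (n m : ℕ)
    (A : Matrix (Fin n) (Fin m) (NovikovSubring K G)) (t : Fin n → ℝ) :
    ∃ γ : ℝ, ∀ w : Fin n → NovikovSubring K G,
      ∃ x₀ : Fin m → NovikovSubring K G,
        nubartS t w - (γ : EReal) ≤ nubarS x₀ ∧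
        nubartS t (w - A.mulVec x₀)
          = ⨆ x : Fin m → NovikovSubring K G, nubartS t (w - A.mulVec x) := by
  obtain ⟨γ, D, hD, hD0, hcorr⟩ := exists_isCorrection_of_lt A t
  refine ⟨γ, fun w => ?_⟩
  by_cases h : ∀ k, ∃ u, IsCorrection A t γ D (w - A *ᵥ greedy A t γ D w k) u
  · obtain ⟨x, hx, hbound⟩ := exists_nubartS_eq_top_of_forall_isCorrection hD hD0 h
    exact ⟨x, hbound, le_antisymm (le_iSup (fun x => nubartS t (w - A *ᵥ x)) x) (hx ▸ le_top)⟩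
  · obtain ⟨k, hk⟩ := not_forall.1 h
    refine ⟨greedy A t γ D w k, nubartS_sub_le_nubarS_greedy k,
      le_antisymm (le_iSup (fun x => nubartS t (w - A *ᵥ x)) _) (iSup_le fun x => ?_)⟩
    exact not_lt.1 fun hlt => hk (hcorr w _ x hlt)
end
end

section
/- Let G' ⊇ G be additive subgroups of ℝ, A an n×m matrix over Λ_K(G), and w ∈ Λ_K(G)^n. For any x ∈ Λ_K(G')^m, write x' for the vector obtained from x by keeping in each coordinate only the terms with exponents in G. Then ν̄_{t⃗}(w − A x') ≥ ν̄_{t⃗}(w − A x) for any t⃗ ∈ ℝ^n; consequently sup_{x ∈ Λ_K(G')^m} ν̄_{t⃗}(w − Ax) = sup_{x ∈ Λ_K(G)^m} ν̄_{t⃗}(w − Ax). -/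
/-! Since the entries of `w` and `A` are supported in `G`, truncation to `G` commutes with
`x ↦ w - A x`: multiplication by a series supported in `G` maps series supported in `G` into
`G` and series supported off `G` off `G`. So `w - A x'` is the truncation of `w - A x`; its
support is smaller, hence its valuation is larger. -/
set_option synthInstance.maxHeartbeats 1000000
set_option maxHeartbeats 1000000
open Classical
noncomputable section

variable {K : Type*} [CommRing K]

variable {G : AddSubgroup ℝ}

/-- The shifted valuation `ν̄_t(a) = min_i (ν(a_i) − t_i)` on vectors. -/
def nubartH' {K : Type*} [CommRing K] {n : ℕ} (t : Fin n → ℝ)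
    (v : Fin n → HahnSeries ℝ K) : EReal :=
  ⨅ i, (nuH (v i) - ((t i : ℝ) : EReal))

/-- Truncation: keep only the terms with exponents in `G`. -/
def truncTo {K : Type*} [CommRing K] (G : AddSubgroup ℝ) (x : HahnSeries ℝ K) :
    HahnSeries ℝ K where
  coeff g := if g ∈ G then x.coeff g else 0
  isPWO_support' := x.isPWO_support.mono (by
    intro g hg
    simp only [Function.mem_support] at hg ⊢
    intro h0
    apply hg
    split_ifs <;> simp [h0])


lemma coeff_truncTo (G : AddSubgroup ℝ) (x : HahnSeries ℝ K) (g : ℝ) :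
    (truncTo G x).coeff g = if g ∈ G then x.coeff g else 0 :=
  rfl

lemma support_truncTo_subset (G : AddSubgroup ℝ) (x : HahnSeries ℝ K) :
    (truncTo G x).support ⊆ (G : Set ℝ) ∩ x.support := by
  intro g hg
  rw [HahnSeries.mem_support, coeff_truncTo] at hg
  split_ifs at hg with hgG
  exacts [⟨hgG, hg⟩, absurd rfl hg]

lemma truncTo_eq_self {G : AddSubgroup ℝ} {x : HahnSeries ℝ K} (hx : x.support ⊆ G) :
    truncTo G x = x := by
  ext g
  rw [coeff_truncTo]
  split_ifs with hg
  · rfl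
  · exact (not_not.1 fun h => hg (hx h)).symm

lemma truncTo_eq_zero {G : AddSubgroup ℝ} {x : HahnSeries ℝ K}
    (hx : Disjoint x.support G) : truncTo G x = 0 := by
  ext g
  rw [coeff_truncTo, HahnSeries.coeff_zero]
  split_ifs with hg
  · exact not_not.1 fun h => hx.ne_of_mem h hg rfl
  · rfl

lemma truncTo_add (G : AddSubgroup ℝ) (x y : HahnSeries ℝ K) :
    truncTo G (x + y) = truncTo G x + truncTo G y := by
  ext g
  simp only [coeff_truncTo, HahnSeries.coeff_add]
  split_ifs <;> simp

def truncToAddMonoidHom (G : AddSubgroup ℝ) : HahnSeries ℝ K →+ HahnSeries ℝ K where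
  toFun := truncTo G
  map_zero' := truncTo_eq_self (by simp)
  map_add' := truncTo_add G

lemma InNov.mono {G G' : AddSubgroup ℝ} (hGG : G ≤ G') {x : HahnSeries ℝ K}
    (hx : InNov G x) : InNov G' x :=
  ⟨hx.1.trans hGG, hx.2⟩

lemma InNov.truncTo {G G' : AddSubgroup ℝ} {x : HahnSeries ℝ K} (hx : InNov G' x) :
    InNov G (truncTo G x) :=
  ⟨fun _ hg => (support_truncTo_subset G x hg).1,
    fun C => (hx.2 C).subset fun _ ⟨hg, hgC⟩ => ⟨(support_truncTo_subset G x hg).2, hgC⟩⟩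

lemma truncTo_mul_of_support_subset {G : AddSubgroup ℝ} {a : HahnSeries ℝ K}
    (ha : a.support ⊆ G) (x : HahnSeries ℝ K) :
    truncTo G (a * x) = a * truncTo G x := by
  have hrest : Disjoint (x - truncTo G x).support G := by
    refine Set.disjoint_left.2 fun g hg hgG => hg ?_
    rw [HahnSeries.coeff_sub, coeff_truncTo, if_pos (SetLike.mem_coe.1 hgG), sub_self]
  have hmain : (a * truncTo G x).support ⊆ G := by
    refine HahnSeries.support_mul_subset.trans ?_
    rintro _ ⟨b, hb, c, hc, rfl⟩
    exact G.add_mem (ha hb) (support_truncTo_subset G x hc).1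
  have hoff : Disjoint (a * (x - truncTo G x)).support G := by
    refine Set.disjoint_left.2 fun _ hg hgG => ?_
    obtain ⟨b, hb, c, hc, rfl⟩ := HahnSeries.support_mul_subset hg
    exact Set.disjoint_left.1 hrest hc (by simpa using G.sub_mem hgG (ha hb))
  calc truncTo G (a * x)
      = truncTo G (a * truncTo G x) + truncTo G (a * (x - truncTo G x)) := by
        rw [← truncTo_add, ← mul_add, add_sub_cancel]
    _ = a * truncTo G x := by rw [truncTo_eq_self hmain, truncTo_eq_zero hoff, add_zero]

lemma truncTo_sub_mulVec {G : AddSubgroup ℝ} {ι κ : Type*} [Fintype κ]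
    {A : Matrix ι κ (HahnSeries ℝ K)} (hA : ∀ i j, (A i j).support ⊆ G)
    {w : ι → HahnSeries ℝ K} (hw : ∀ i, (w i).support ⊆ G) (x : κ → HahnSeries ℝ K)
    (i : ι) :
    truncTo G ((w - A.mulVec x) i) = (w - A.mulVec fun j => truncTo G (x j)) i := by
  simp only [Pi.sub_apply, Matrix.mulVec, dotProduct]
  change truncToAddMonoidHom G _ = _
  rw [map_sub, map_sum]
  exact congr_arg₂ _ (truncTo_eq_self (hw i))
    (Finset.sum_congr rfl fun j _ => truncTo_mul_of_support_subset (hA i j) (x j))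

lemma nuH_le_of_support_subset {u s : HahnSeries ℝ K}
    (h : u.support ⊆ s.support) : nuH s ≤ nuH u := by
  by_cases hu : u = 0
  · simp [nuH, hu]
  · have hne : s.coeff u.order ≠ 0 := h (HahnSeries.coeff_order_eq_zero.not.mpr hu)
    have hs : s ≠ 0 := fun h0 => hne (by simp [h0])
    rw [nuH, nuH, if_neg hu, if_neg hs]
    exact_mod_cast HahnSeries.order_le_of_coeff_ne_zero hne

lemma nuH_le_nuH_truncTo (G : AddSubgroup ℝ) (x : HahnSeries ℝ K) :
    nuH x ≤ nuH (truncTo G x) :=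
  nuH_le_of_support_subset fun _ hg => (support_truncTo_subset G x hg).2

lemma nubartH'_mono {n : ℕ} (t : Fin n → ℝ) {u v : Fin n → HahnSeries ℝ K}
    (h : ∀ i, nuH (u i) ≤ nuH (v i)) : nubartH' t u ≤ nubartH' t v :=
  iInf_mono fun i => EReal.sub_le_sub (h i) le_rfl

/-- for `G ≤ G'`, a matrix `A` and vector `w` over `Λ_K(G)`, and
`x` over `Λ_K(G')`, truncating `x` to exponents in `G` does not decrease
`ν̄_t(w − Ax)`; consequently the suprema over `Λ_K(G')^m` and `Λ_K(G)^m`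
coincide. -/
theorem truncation_approximation {K : Type*} [CommRing K]
    (G G' : AddSubgroup ℝ) (hGG : G ≤ G') (n m : ℕ) (t : Fin n → ℝ)
    (A : Matrix (Fin n) (Fin m) (HahnSeries ℝ K)) (hA : ∀ i j, InNov G (A i j))
    (w : Fin n → HahnSeries ℝ K) (hw : ∀ i, InNov G (w i)) :
    (∀ x : Fin m → HahnSeries ℝ K, (∀ j, InNov G' (x j)) →
      nubartH' t (w - A.mulVec x)
        ≤ nubartH' t (w - A.mulVec fun j => truncTo G (x j))) ∧
    (⨆ x ∈ {x : Fin m → HahnSeries ℝ K | ∀ j, InNov G' (x j)},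
        nubartH' t (w - A.mulVec x))
      = (⨆ x ∈ {x : Fin m → HahnSeries ℝ K | ∀ j, InNov G (x j)},
          nubartH' t (w - A.mulVec x)) := by
  have key : ∀ x : Fin m → HahnSeries ℝ K,
      nubartH' t (w - A.mulVec x) ≤ nubartH' t (w - A.mulVec fun j => truncTo G (x j)) :=
    fun x => nubartH'_mono t fun i => by
      rw [← truncTo_sub_mulVec (fun i j => (hA i j).1) (fun i => (hw i).1)]
      exact nuH_le_nuH_truncTo G _
  refine ⟨fun x _ => key x, le_antisymm ?_ ?_⟩
  · refine iSup₂_le fun x hx => (key x).trans ?_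
    exact le_iSup₂_of_le (fun j => truncTo G (x j)) (fun j => (hx j).truncTo) le_rfl
  · exact iSup₂_le fun x hx => le_iSup₂_of_le x (fun j => (hx j).mono hGG) le_rfl
end
end

section
/- Let 𝔠 be a filtered Floer-Novikov complex over a Noetherian ring R. Then for any nonzero homology class a ∈ H_*(𝔠), the spectral number ρ(a) = inf{ℓ(c) : c ∈ C_*(𝔠), [c] = a} is finite (ρ(a) > −∞). -/
/-!
If `ρ([c₀]) = -∞`, then `c₀` is a limit of boundaries: there are chains `h` with `c₀ - ∂h` of
arbitrarily low level. We show that such a chain is itself a boundary, contradicting `[c₀] ≠ 0`.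

The finitely generated group `ker ω` acts on chains by translations, which preserve levels and
commute with `∂`, so the Noetherian ring `R[ker ω]` acts as well. At a fixed level `ν` the
coefficients of a chain along the finitely many orbits form a vector in a finite free
`R[ker ω]`-module, so the vectors of all approximable chains of level `≤ ν` are spanned by those
of finitely many of them, `xᵢ`. Each `xᵢ` has a gap below level `ν`; approximating it across the
gap gives `hᵢ` whose boundary agrees above level `ν - δ` with the level-`ν` slice of `xᵢ`.
`R[ker ω]`-combinations of the `hᵢ` do the same for every approximable chain of level `≤ ν`, with
constants independent of the chain, and translating by `Γ` from one reference level per orbit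
makes them independent of `ν` as well.

Removing the finitely many levels of `x` in `(ν - δ, ν]` one at a time thus lowers the level of
`x` by `δ` at the cost of a primitive of level `≤ ν + K`. Iterating, the partial primitives
converge in the filtration, and their limit `H` satisfies `∂H = c₀`.
-/

noncomputable section

open Filter

variable {R : Type*} [CommRing R] {Γ : Type*} [CommGroup Γ] {P : Type*} [MulAction Γ P]

/-- The chain condition for the downward-completed Floer complex: for every `C`
only finitely many points with nonzero coefficient have action greater than `C`. -/
def IsFloerChain (act : P → ℝ) (c : P → R) : Prop :=
  ∀ C : ℝ, {p : P | c p ≠ 0 ∧ C < act p}.Finite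

/-- The boundary operator determined by the incidence numbers `bnd`:
`(∂c)(q) = Σ_p c(p) · n(p,q)` (a finite sum on Floer chains). -/
def floerBdry (bnd : P → P → R) (c : P → R) : P → R :=
  fun q => ∑ᶠ p : P, c p * bnd p q

/-- The filtration level `ℓ(c) = max {𝒜(p) : c_p ≠ 0}` (with `ℓ(0) = -∞`). -/
def floerLevel (act : P → ℝ) (c : P → R) : EReal :=
  ⨆ p ∈ {p : P | c p ≠ 0}, (act p : EReal)

/-- A filtered Floer–Novikov complex over `R`: a principal `Γ`-bundle `P → S`
with `S` finite (encoded as a free `Γ`-action on `P` with finitely many orbits),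
an action functional and period homomorphism satisfying
`𝒜(g·p) = 𝒜(p) − ω(g)`, and incidence numbers `n(p,q)` which strictly decrease
the action, are `Γ`-invariant, and define a boundary operator on the completed
complex squaring to zero. -/
structure FloerComplex (R : Type*) [CommRing R] (Γ : Type*) [CommGroup Γ]
    (P : Type*) [MulAction Γ P] where
  /-- the `Γ`-action on the total space `P` is free -/
  free : ∀ (g : Γ) (p : P), g • p = p → g = 1
  /-- the base `S = P/Γ` is a finite set -/
  finiteOrbits : Finite (MulAction.orbitRel.Quotient Γ P)
  /-- the action functional `𝒜 : P → ℝ` -/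
  act : P → ℝ
  /-- the period homomorphism `ω : Γ → ℝ` -/
  per : Γ → ℝ
  per_hom : ∀ g h : Γ, per (g * h) = per g + per h
  act_smul : ∀ (g : Γ) (p : P), act (g • p) = act p - per g
  /-- the incidence numbers `n : P × P → R` -/
  bnd : P → P → R
  bnd_vanish : ∀ p q : P, bnd p q ≠ 0 → act q < act p
  bnd_equivariant : ∀ (g : Γ) (p q : P), bnd (g • p) (g • q) = bnd p q
  bnd_chain : ∀ p : P, ∀ C : ℝ, {q : P | bnd p q ≠ 0 ∧ C < act q}.Finite
  bdry_isChain : ∀ c : P → R, IsFloerChain act c → IsFloerChain act (floerBdry bnd c)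
  bdry_bdry : ∀ c : P → R, IsFloerChain act c → floerBdry bnd (floerBdry bnd c) = 0

/-- The set of filtration levels of the representatives of the homology class
of the cycle `c₀`; its infimum is the spectral number `ρ([c₀])`. -/
def repLevels (𝔠 : FloerComplex R Γ P) (c₀ : P → R) : Set EReal :=
  {x : EReal | ∃ c : P → R, IsFloerChain 𝔠.act c ∧ floerBdry 𝔠.bnd c = 0 ∧
    (∃ h : P → R, IsFloerChain 𝔠.act h ∧ floerBdry 𝔠.bnd h = c - c₀) ∧
    x = floerLevel 𝔠.act c}

lemma exists_uniform_bounds {ι : Type*} [Finite ι] {Q : ι → ℝ → ℝ → Prop}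
    (hQ : ∀ i ⦃K K' δ δ' : ℝ⦄, K ≤ K' → δ' ≤ δ → Q i K δ → Q i K' δ')
    (h : ∀ i, ∃ K δ, 0 < δ ∧ Q i K δ) : ∃ K δ, 0 < δ ∧ ∀ i, Q i K δ := by
  choose K δ hδ hKδ using h
  obtain ⟨K₀, hK₀⟩ := Finite.exists_le K
  obtain ⟨δ₀, hδ₀⟩ := Finite.exists_ge fun i => (⟨δ i, hδ i⟩ : Set.Ioi (0 : ℝ))
  exact ⟨K₀, δ₀, δ₀.2, fun i => hQ i (hK₀ i) (hδ₀ i) (hKδ i)⟩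

lemma CommGroup.fg_subgroup {G : Type*} [CommGroup G] [Group.FG G] (H : Subgroup G) :
    Group.FG H := by
  rw [Group.fg_iff_subgroup_fg, Subgroup.fg_iff_add_fg]
  have : Module.Finite ℤ (Additive G) := Module.Finite.iff_addGroup_fg.2 inferInstance
  have := (Submodule.fg_iff_addSubgroup_fg _).1
    (IsNoetherian.noetherian (AddSubgroup.toIntSubmodule H.toAddSubgroup))
  rwa [AddSubgroup.toIntSubmodule_toAddSubgroup] at this

namespace FloerComplex

variable (𝔠 : FloerComplex R Γ P)

def perHom : Γ →* Multiplicative ℝ :=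
  MonoidHom.mk' (fun g => .ofAdd (𝔠.per g)) fun g h => congrArg _ (𝔠.per_hom g h)

def perKer : Subgroup Γ := 𝔠.perHom.ker

variable {𝔠}

lemma mem_perKer {g : Γ} : g ∈ 𝔠.perKer ↔ 𝔠.per g = 0 := by
  simp [perKer, perHom]

lemma per_inv (g : Γ) : 𝔠.per g⁻¹ = -𝔠.per g :=
  congrArg Multiplicative.toAdd (map_inv 𝔠.perHom g)

lemma act_inv_smul (g : Γ) (p : P) : 𝔠.act (g⁻¹ • p) = 𝔠.act p + 𝔠.per g := by
  rw [𝔠.act_smul, per_inv, sub_neg_eq_add]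

lemma act_smul_of_mem_perKer {k : Γ} (hk : k ∈ 𝔠.perKer) (p : P) : 𝔠.act (k • p) = 𝔠.act p := by
  rw [𝔠.act_smul, mem_perKer.1 hk, sub_zero]

/-! ### Chains and the action filtration -/

variable (𝔠)

def chains : Submodule R (P → R) where
  carrier := {c | IsFloerChain 𝔠.act c}
  zero_mem' C := by simp
  add_mem' {c c'} hc hc' C := ((hc C).union (hc' C)).subset fun p ⟨hp, hC⟩ =>
    (Function.support_add c c' hp).imp (⟨·, hC⟩) (⟨·, hC⟩)
  smul_mem' r c hc C := (hc C).subset fun p ⟨hp, hC⟩ =>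
    ⟨Function.support_const_smul_subset r c hp, hC⟩

def filtration (μ : ℝ) : Submodule R (P → R) where
  carrier := {c | Function.support c ⊆ {p | 𝔠.act p ≤ μ}}
  zero_mem' := by simp
  add_mem' hc hc' := (Function.support_add _ _).trans (Set.union_subset hc hc')
  smul_mem' r _ hc := (Function.support_const_smul_subset r _).trans hc

variable {𝔠}

lemma mem_filtration {c : P → R} {μ : ℝ} : c ∈ 𝔠.filtration μ ↔ ∀ p, c p ≠ 0 → 𝔠.act p ≤ μ :=
  Iff.rfl

lemma sub_mem_filtration {x y : P → R} {μ : ℝ} :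
    x - y ∈ 𝔠.filtration μ ↔ ∀ p, μ < 𝔠.act p → x p = y p := by
  simp only [mem_filtration, Pi.sub_apply, sub_ne_zero, ne_eq, ← not_lt, not_imp_not]

lemma filtration_mono {μ μ' : ℝ} (h : μ ≤ μ') : 𝔠.filtration μ ≤ 𝔠.filtration μ' :=
  fun _ hc _ hp => (hc hp).trans h

lemma eq_zero_of_forall_mem_filtration {c : P → R} (h : ∀ μ, c ∈ 𝔠.filtration μ) : c = 0 := by
  funext p
  by_contra hp
  linarith [mem_filtration.1 (h (𝔠.act p - 1)) p hp]

lemma floerLevel_le_iff {c : P → R} {μ : ℝ} :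
    floerLevel 𝔠.act c ≤ μ ↔ c ∈ 𝔠.filtration μ := by
  simp only [floerLevel, iSup₂_le_iff, EReal.coe_le_coe_iff]
  rfl

lemma exists_mem_filtration {c : P → R} (hc : c ∈ 𝔠.chains) : ∃ μ, c ∈ 𝔠.filtration μ := by
  obtain ⟨b, hb⟩ := ((hc 0).image 𝔠.act).bddAbove
  refine ⟨max 0 b, fun p hp => ?_⟩
  rcases le_or_gt (𝔠.act p) 0 with h0 | h0
  · exact h0.trans (le_max_left _ _)
  · exact (hb ⟨p, ⟨hp, h0⟩, rfl⟩).trans (le_max_right _ _)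

lemma exists_top_level {c : P → R} (hc : c ∈ 𝔠.chains) {μ : ℝ}
    (h : ∃ p, c p ≠ 0 ∧ μ < 𝔠.act p) :
    ∃ p, c p ≠ 0 ∧ μ < 𝔠.act p ∧ c ∈ 𝔠.filtration (𝔠.act p) := by
  obtain ⟨p, hp, hmax⟩ := Set.exists_max_image _ 𝔠.act (hc μ) h
  refine ⟨p, hp.1, hp.2, fun q hq => ?_⟩
  rcases le_or_gt (𝔠.act q) μ with hq' | hq'
  · exact hq'.trans hp.2.le
  · exact hmax q ⟨hq, hq'⟩

lemma mem_chains_of_forall_sub_mem_filtration {x : P → R}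
    (h : ∀ C, ∃ y ∈ 𝔠.chains, x - y ∈ 𝔠.filtration C) : x ∈ 𝔠.chains := by
  intro C
  obtain ⟨y, hy, hxy⟩ := h C
  refine (hy C).subset fun p ⟨hp, hC⟩ => ⟨?_, hC⟩
  rwa [← sub_mem_filtration.1 hxy p hC]

lemma support_mul_bnd_finite {c : P → R} (hc : c ∈ 𝔠.chains) (q : P) :
    (Function.support fun p => c p * 𝔠.bnd p q).Finite :=
  (hc (𝔠.act q)).subset fun _ hp =>
    ⟨left_ne_zero_of_mul hp, 𝔠.bnd_vanish _ _ (right_ne_zero_of_mul hp)⟩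

lemma floerBdry_zero : floerBdry 𝔠.bnd (0 : P → R) = 0 := by
  funext q
  simp [floerBdry]

lemma floerBdry_neg (c : P → R) : floerBdry 𝔠.bnd (-c) = -floerBdry 𝔠.bnd c := by
  funext q
  simp only [floerBdry, Pi.neg_apply, neg_mul, finsum_neg_distrib]

lemma floerBdry_smul (r : R) {c : P → R} (hc : c ∈ 𝔠.chains) :
    floerBdry 𝔠.bnd (r • c) = r • floerBdry 𝔠.bnd c := by
  funext q
  simp only [floerBdry, Pi.smul_apply, smul_eq_mul, mul_assoc]
  exact (mul_finsum' _ _ (support_mul_bnd_finite hc q)).symm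

lemma floerBdry_sum {ι : Type*} (s : Finset ι) {c : ι → P → R} (hc : ∀ i ∈ s, c i ∈ 𝔠.chains) :
    floerBdry 𝔠.bnd (∑ i ∈ s, c i) = ∑ i ∈ s, floerBdry 𝔠.bnd (c i) := by
  funext q
  simp only [floerBdry, Finset.sum_apply, Finset.sum_mul]
  exact finsum_sum_comm _ _ fun i hi => support_mul_bnd_finite (hc i hi) q

lemma floerBdry_add {c c' : P → R} (hc : c ∈ 𝔠.chains) (hc' : c' ∈ 𝔠.chains) :
    floerBdry 𝔠.bnd (c + c') = floerBdry 𝔠.bnd c + floerBdry 𝔠.bnd c' := by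
  simpa using floerBdry_sum (𝔠 := 𝔠) Finset.univ (c := ![c, c']) (by simp [hc, hc'])

lemma floerBdry_sub {c c' : P → R} (hc : c ∈ 𝔠.chains) (hc' : c' ∈ 𝔠.chains) :
    floerBdry 𝔠.bnd (c - c') = floerBdry 𝔠.bnd c - floerBdry 𝔠.bnd c' := by
  rw [sub_eq_add_neg, floerBdry_add hc (neg_mem hc'), floerBdry_neg, ← sub_eq_add_neg]

lemma floerBdry_mem_chains {c : P → R} (hc : c ∈ 𝔠.chains) : floerBdry 𝔠.bnd c ∈ 𝔠.chains :=
  𝔠.bdry_isChain c hc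

lemma floerBdry_mem_filtration {c : P → R} {μ : ℝ} (hc : c ∈ 𝔠.filtration μ) :
    floerBdry 𝔠.bnd c ∈ 𝔠.filtration μ := fun q hq => by
  obtain ⟨p, hp⟩ : ∃ p, c p * 𝔠.bnd p q ≠ 0 := by
    by_contra! h
    exact hq (finsum_eq_zero_of_forall_eq_zero h)
  exact (𝔠.bnd_vanish p q (right_ne_zero_of_mul hp)).le.trans (hc (left_ne_zero_of_mul hp))

/-! ### Translations and slices -/

def shift (γ : Γ) : (P → R) →ₗ[R] (P → R) := LinearMap.funLeft R R (γ⁻¹ • ·)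

lemma shift_apply (γ : Γ) (x : P → R) (p : P) : shift γ x p = x (γ⁻¹ • p) := rfl

lemma shift_shift_inv (γ : Γ) (x : P → R) : shift γ (shift γ⁻¹ x) = x := by
  funext p
  simp [shift_apply]

lemma shift_mem_chains (γ : Γ) {x : P → R} (hx : x ∈ 𝔠.chains) : shift γ x ∈ 𝔠.chains :=
  fun C => ((hx (C + 𝔠.per γ)).image (γ • ·)).subset fun p ⟨hp, hC⟩ =>
    ⟨γ⁻¹ • p, ⟨hp, by rw [act_inv_smul]; linarith⟩, smul_inv_smul γ p⟩

lemma shift_mem_filtration (γ : Γ) {x : P → R} {μ : ℝ} (hx : x ∈ 𝔠.filtration μ) :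
    shift γ x ∈ 𝔠.filtration (μ - 𝔠.per γ) := fun p hp => by
  have : 𝔠.act (γ⁻¹ • p) ≤ μ := hx (show x (γ⁻¹ • p) ≠ 0 from hp)
  rw [act_inv_smul] at this
  exact le_sub_iff_add_le.2 this

lemma floerBdry_shift (γ : Γ) (c : P → R) :
    floerBdry 𝔠.bnd (shift γ c) = shift γ (floerBdry 𝔠.bnd c) := by
  funext q
  simp only [floerBdry, shift_apply]
  rw [← finsum_comp_equiv (MulAction.toPerm γ)]
  refine finsum_congr fun p => ?_
  simp only [MulAction.toPerm_apply, inv_smul_smul]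
  rw [← 𝔠.bnd_equivariant γ⁻¹, inv_smul_smul]

variable (𝔠) in
def slice (ν : ℝ) : (P → R) →ₗ[R] (P → R) where
  toFun x p := if 𝔠.act p = ν then x p else 0
  map_add' x y := by funext p; split_ifs <;> simp [*]
  map_smul' r x := by funext p; split_ifs <;> simp [*]

lemma slice_apply (ν : ℝ) (x : P → R) (p : P) :
    𝔠.slice ν x p = if 𝔠.act p = ν then x p else 0 := rfl

lemma slice_shift (ν : ℝ) (γ : Γ) (x : P → R) :
    𝔠.slice ν (shift γ x) = shift γ (𝔠.slice (ν + 𝔠.per γ) x) := by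
  funext p
  simp only [slice_apply, shift_apply, act_inv_smul, add_left_inj]

lemma slice_shift_of_mem_perKer (ν : ℝ) {k : Γ} (hk : k ∈ 𝔠.perKer) (x : P → R) :
    𝔠.slice ν (shift k x) = shift k (𝔠.slice ν x) := by
  rw [slice_shift, mem_perKer.1 hk, add_zero]

lemma sub_slice_apply (ν : ℝ) (x : P → R) (p : P) :
    (x - 𝔠.slice ν x) p = if 𝔠.act p = ν then 0 else x p := by
  rw [Pi.sub_apply, slice_apply]
  split_ifs <;> simp

lemma exists_sub_slice_mem_filtration {x : P → R} (hxc : x ∈ 𝔠.chains) {ν : ℝ}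
    (hx : x ∈ 𝔠.filtration ν) : ∃ g > 0, x - 𝔠.slice ν x ∈ 𝔠.filtration (ν - g) := by
  have hy : ∀ p, (x - 𝔠.slice ν x) p ≠ 0 → x p ≠ 0 ∧ 𝔠.act p ≠ ν := fun p => by
    rw [sub_slice_apply]
    split_ifs <;> simp_all
  have hyc : x - 𝔠.slice ν x ∈ 𝔠.chains := fun C =>
    (hxc C).subset fun p ⟨hp, hC⟩ => ⟨(hy p hp).1, hC⟩
  by_cases h : ∃ p, (x - 𝔠.slice ν x) p ≠ 0 ∧ ν - 1 < 𝔠.act p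
  · obtain ⟨p, hp, -, hyp⟩ := exists_top_level hyc h
    have hpν : 𝔠.act p < ν := lt_of_le_of_ne (hx (hy p hp).1) (hy p hp).2
    exact ⟨ν - 𝔠.act p, sub_pos.2 hpν, by rwa [sub_sub_cancel]⟩
  · push Not at h
    exact ⟨1, one_pos, h⟩

variable (𝔠) in
def IsApproxBoundary (x : P → R) : Prop :=
  ∀ μ : ℝ, ∃ h ∈ 𝔠.chains, x - floerBdry 𝔠.bnd h ∈ 𝔠.filtration μ

namespace IsApproxBoundary

variable {x : P → R}

lemma mem_chains (hx : 𝔠.IsApproxBoundary x) : x ∈ 𝔠.chains :=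
  mem_chains_of_forall_sub_mem_filtration fun C =>
    let ⟨_, hh, hxh⟩ := hx C
    ⟨_, floerBdry_mem_chains hh, hxh⟩

lemma sub_floerBdry (hx : 𝔠.IsApproxBoundary x) {g : P → R} (hg : g ∈ 𝔠.chains) :
    𝔠.IsApproxBoundary (x - floerBdry 𝔠.bnd g) := fun μ => by
  obtain ⟨h, hh, hxh⟩ := hx μ
  refine ⟨h - g, sub_mem hh hg, ?_⟩
  rwa [floerBdry_sub hh hg, sub_sub_sub_cancel_right]

lemma shift (hx : 𝔠.IsApproxBoundary x) (γ : Γ) : 𝔠.IsApproxBoundary (shift γ x) := fun μ => by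
  obtain ⟨h, hh, hxh⟩ := hx (μ + 𝔠.per γ)
  refine ⟨FloerComplex.shift γ h, shift_mem_chains γ hh, ?_⟩
  rw [floerBdry_shift, ← map_sub]
  simpa using shift_mem_filtration γ hxh

end IsApproxBoundary

/-! ### The group algebra of `ker ω` and coordinates at a level -/

variable (𝔠) in
def kerAct (r : MonoidAlgebra R 𝔠.perKer) : Module.End R (P → R) :=
  r.coeff.sum fun k a => a • shift (k : Γ)

lemma kerAct_apply (r : MonoidAlgebra R 𝔠.perKer) (x : P → R) :
    𝔠.kerAct r x = ∑ k ∈ r.coeff.support, r.coeff k • shift (k : Γ) x := by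
  simp [kerAct, Finsupp.sum, LinearMap.sum_apply]

lemma kerAct_mem_chains (r : MonoidAlgebra R 𝔠.perKer) {x : P → R} (hx : x ∈ 𝔠.chains) :
    𝔠.kerAct r x ∈ 𝔠.chains := by
  rw [kerAct_apply]
  exact Submodule.sum_mem _ fun k _ => Submodule.smul_mem _ _ (shift_mem_chains _ hx)

lemma kerAct_mem_filtration (r : MonoidAlgebra R 𝔠.perKer) {x : P → R} {μ : ℝ}
    (hx : x ∈ 𝔠.filtration μ) : 𝔠.kerAct r x ∈ 𝔠.filtration μ := by
  rw [kerAct_apply]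
  refine Submodule.sum_mem _ fun k _ => Submodule.smul_mem _ _ ?_
  simpa [mem_perKer.1 k.2] using shift_mem_filtration (k : Γ) hx

lemma floerBdry_kerAct (r : MonoidAlgebra R 𝔠.perKer) {x : P → R} (hx : x ∈ 𝔠.chains) :
    floerBdry 𝔠.bnd (𝔠.kerAct r x) = 𝔠.kerAct r (floerBdry 𝔠.bnd x) := by
  rw [kerAct_apply, kerAct_apply,
    floerBdry_sum _ fun k _ => Submodule.smul_mem _ _ (shift_mem_chains _ hx)]
  refine Finset.sum_congr rfl fun k _ => ?_
  rw [floerBdry_smul _ (shift_mem_chains _ hx), floerBdry_shift]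

lemma slice_kerAct (ν : ℝ) (r : MonoidAlgebra R 𝔠.perKer) (x : P → R) :
    𝔠.slice ν (𝔠.kerAct r x) = 𝔠.kerAct r (𝔠.slice ν x) := by
  rw [kerAct_apply, kerAct_apply, map_sum]
  refine Finset.sum_congr rfl fun k _ => ?_
  rw [map_smul, slice_shift_of_mem_perKer ν k.2]

lemma perKer_smul_injective (p : P) : Function.Injective fun k : 𝔠.perKer => (k : Γ) • p :=
  fun k k' h => Subtype.ext (inv_mul_eq_one.1
    (𝔠.free ((k' : Γ)⁻¹ * k) p (by simp only [mul_smul, h, inv_smul_smul]))).symm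

lemma support_perKer_finite {x : P → R} (hx : x ∈ 𝔠.chains) (b : P) :
    (Function.support fun k : 𝔠.perKer => x ((k : Γ) • b)).Finite :=
  ((hx (𝔠.act b - 1)).preimage (perKer_smul_injective b).injOn).subset
    fun k hk => ⟨hk, by simp [act_smul_of_mem_perKer k.2]⟩

open Classical in
variable (𝔠) in
def coord {ι : Type*} (b : ι → P) (x : P → R) : ι → MonoidAlgebra R 𝔠.perKer := fun i =>
  if h : (Function.support fun k : 𝔠.perKer => x ((k : Γ) • b i)).Finite then
    .ofCoeff (Finsupp.ofSupportFinite _ h) else 0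

section Coord

variable {ι : Type*} {b : ι → P}

lemma coeff_coord {x : P → R} (hx : x ∈ 𝔠.chains) (i : ι) (k : 𝔠.perKer) :
    (𝔠.coord b x i).coeff k = x ((k : Γ) • b i) := by
  rw [coord, dif_pos (support_perKer_finite hx _)]
  rfl

lemma coord_sum {κ : Type*} (s : Finset κ) {x : κ → P → R} (hx : ∀ j ∈ s, x j ∈ 𝔠.chains) :
    𝔠.coord b (∑ j ∈ s, x j) = ∑ j ∈ s, 𝔠.coord b (x j) := by
  funext i
  ext k
  simp only [coeff_coord (Submodule.sum_mem _ hx), Finset.sum_apply, MonoidAlgebra.coeff_sum,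
    Finsupp.finsetSum_apply]
  exact Finset.sum_congr rfl fun j hj => (coeff_coord (hx j hj) i k).symm

lemma coord_kerAct (r : MonoidAlgebra R 𝔠.perKer) {x : P → R} (hx : x ∈ 𝔠.chains) :
    𝔠.coord b (𝔠.kerAct r x) = r • 𝔠.coord b x := by
  funext i
  ext k₀
  rw [Pi.smul_apply, smul_eq_mul, coeff_coord (kerAct_mem_chains r hx), kerAct_apply,
    MonoidAlgebra.coeff_mul_apply_left, Finsupp.sum, Finset.sum_apply]
  refine Finset.sum_congr rfl fun k _ => ?_
  simp [shift_apply, coeff_coord hx, mul_smul]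

lemma slice_eq_of_coord_eq {ν : ℝ}
    (hb : ∀ p, 𝔠.act p = ν → ∃ i, ∃ k ∈ 𝔠.perKer, k • b i = p) {x y : P → R}
    (hx : x ∈ 𝔠.chains) (hy : y ∈ 𝔠.chains) (h : 𝔠.coord b x = 𝔠.coord b y) :
    𝔠.slice ν x = 𝔠.slice ν y := by
  funext p
  rw [slice_apply, slice_apply]
  split_ifs with hp
  · obtain ⟨i, k, hk, rfl⟩ := hb p hp
    simpa [coeff_coord hx, coeff_coord hy] using congrArg (fun v => (v i).coeff ⟨k, hk⟩) h
  · rfl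

end Coord

variable (𝔠) in
lemma exists_basePoints (ν : ℝ) : ∃ b : MulAction.orbitRel.Quotient Γ P → P,
    ∀ p, 𝔠.act p = ν → ∃ i, ∃ k ∈ 𝔠.perKer, k • b i = p := by
  have : ∀ s : MulAction.orbitRel.Quotient Γ P, ∃ b : P,
      ∀ p, Quotient.mk'' p = s → 𝔠.act p = ν → ∃ k ∈ 𝔠.perKer, k • b = p := by
    intro s
    by_cases h : ∃ p₀, Quotient.mk'' p₀ = s ∧ 𝔠.act p₀ = ν
    · obtain ⟨p₀, rfl, hp₀⟩ := h
      refine ⟨p₀, fun p hp hpν => ?_⟩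
      obtain ⟨γ, rfl⟩ := MulAction.mem_orbit_iff.1 (Quotient.exact' hp)
      refine ⟨γ, mem_perKer.2 ?_, rfl⟩
      linarith [𝔠.act_smul γ p₀]
    · push Not at h
      exact ⟨s.out, fun p hp hpν => absurd hpν (h p hp)⟩
  choose b hb using this
  exact ⟨b, fun p hp => ⟨_, hb _ p rfl hp⟩⟩

/-! ### Uniform primitives of top slices -/

variable (𝔠) in
def IsSlicePrimitive (K δ ν : ℝ) (x h : P → R) : Prop :=
  h ∈ 𝔠.chains ∧ h ∈ 𝔠.filtration (ν + K) ∧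
    floerBdry 𝔠.bnd h - 𝔠.slice ν x ∈ 𝔠.filtration (ν - δ)

namespace IsSlicePrimitive

variable {K K' δ δ' ν : ℝ} {x h : P → R}

lemma mono (hK : K ≤ K') (hδ : δ' ≤ δ) (hxh : 𝔠.IsSlicePrimitive K δ ν x h) :
    𝔠.IsSlicePrimitive K' δ' ν x h :=
  ⟨hxh.1, filtration_mono (by linarith) hxh.2.1, filtration_mono (by linarith) hxh.2.2⟩

lemma kerAct (hxh : 𝔠.IsSlicePrimitive K δ ν x h) (r : MonoidAlgebra R 𝔠.perKer) :
    𝔠.IsSlicePrimitive K δ ν (𝔠.kerAct r x) (𝔠.kerAct r h) := by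
  refine ⟨kerAct_mem_chains r hxh.1, kerAct_mem_filtration r hxh.2.1, ?_⟩
  rw [floerBdry_kerAct r hxh.1, slice_kerAct, ← map_sub]
  exact kerAct_mem_filtration r hxh.2.2

lemma sum {ι : Type*} (s : Finset ι) {x h : ι → P → R}
    (hxh : ∀ i ∈ s, 𝔠.IsSlicePrimitive K δ ν (x i) (h i)) :
    𝔠.IsSlicePrimitive K δ ν (∑ i ∈ s, x i) (∑ i ∈ s, h i) := by
  refine ⟨Submodule.sum_mem _ fun i hi => (hxh i hi).1,
    Submodule.sum_mem _ fun i hi => (hxh i hi).2.1, ?_⟩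
  rw [floerBdry_sum s fun i hi => (hxh i hi).1, map_sum, ← Finset.sum_sub_distrib]
  exact Submodule.sum_mem _ fun i hi => (hxh i hi).2.2

end IsSlicePrimitive

lemma IsApproxBoundary.exists_isSlicePrimitive {x : P → R} (hx : 𝔠.IsApproxBoundary x) {ν : ℝ}
    (hxν : x ∈ 𝔠.filtration ν) : ∃ K δ, 0 < δ ∧ ∃ h, 𝔠.IsSlicePrimitive K δ ν x h := by
  obtain ⟨g, hg, hgap⟩ := exists_sub_slice_mem_filtration hx.mem_chains hxν
  obtain ⟨h, hh, hxh⟩ := hx (ν - g)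
  obtain ⟨τ, hτ⟩ := exists_mem_filtration hh
  refine ⟨τ - ν, g, hg, h, hh, by rwa [add_sub_cancel], ?_⟩
  simpa using sub_mem hgap hxh

variable (𝔠) in
def HasSlicePrimitives (K δ ν : ℝ) : Prop :=
  ∀ x, 𝔠.IsApproxBoundary x → x ∈ 𝔠.filtration ν → ∃ h, 𝔠.IsSlicePrimitive K δ ν x h

namespace HasSlicePrimitives

variable {K K' δ δ' ν : ℝ}

lemma mono (hK : K ≤ K') (hδ : δ' ≤ δ) (H : 𝔠.HasSlicePrimitives K δ ν) :
    𝔠.HasSlicePrimitives K' δ' ν := fun x hx hxν =>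
  (H x hx hxν).imp fun _ => IsSlicePrimitive.mono hK hδ

lemma shift (H : 𝔠.HasSlicePrimitives K δ ν) (γ : Γ) :
    𝔠.HasSlicePrimitives K δ (ν - 𝔠.per γ) := by
  intro x hx hxν
  obtain ⟨h, hh, hhK, hhδ⟩ := H (FloerComplex.shift γ⁻¹ x) (hx.shift γ⁻¹) <| by
    simpa [per_inv] using shift_mem_filtration γ⁻¹ hxν
  refine ⟨FloerComplex.shift γ h, shift_mem_chains γ hh, ?_, ?_⟩
  · simpa [sub_add_eq_add_sub] using shift_mem_filtration γ hhK
  · rw [← shift_shift_inv γ x, slice_shift, sub_add_cancel, floerBdry_shift, ← map_sub]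
    simpa [sub_right_comm] using shift_mem_filtration γ hhδ

end HasSlicePrimitives

variable (𝔠) in
theorem exists_hasSlicePrimitives [Group.FG Γ] [IsNoetherianRing R] (ν : ℝ) :
    ∃ K δ, 0 < δ ∧ 𝔠.HasSlicePrimitives K δ ν := by
  have := 𝔠.finiteOrbits
  have := CommGroup.fg_subgroup 𝔠.perKer
  have : IsNoetherianRing (MonoidAlgebra R 𝔠.perKer) := Algebra.FiniteType.isNoetherianRing R _
  obtain ⟨b, hb⟩ := 𝔠.exists_basePoints ν
  -- finitely many approximable chains whose level-`ν` coordinates span those of all of them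
  obtain ⟨T, hTG, hT⟩ := (Submodule.fg_span_iff_fg_span_finset_subset
    (R := MonoidAlgebra R 𝔠.perKer)
    (𝔠.coord b '' {x | 𝔠.IsApproxBoundary x ∧ x ∈ 𝔠.filtration ν})).1 (IsNoetherian.noetherian _)
  choose x hx hxT using fun t : T => hTG t.2
  obtain ⟨K, δ, hδ, hprim⟩ := exists_uniform_bounds
    (Q := fun t K δ => ∃ h, 𝔠.IsSlicePrimitive K δ ν (x t) h)
    (fun _ _ _ _ _ hK hδ => Exists.imp fun _ => IsSlicePrimitive.mono hK hδ)
    fun t => (hx t).1.exists_isSlicePrimitive (hx t).2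
  choose h hh using hprim
  refine ⟨K, δ, hδ, fun y hy hyν => ?_⟩
  obtain ⟨c, hc⟩ : ∃ c : T → MonoidAlgebra R 𝔠.perKer,
      ∑ t, c t • 𝔠.coord b (x t) = 𝔠.coord b y := by
    rw [← Submodule.mem_span_range_iff_exists_fun]
    have : Set.range (fun t => 𝔠.coord b (x t)) = T := by simp [hxT]
    rw [this, ← hT]
    exact Submodule.subset_span ⟨y, ⟨hy, hyν⟩, rfl⟩
  have hxc : ∀ t ∈ Finset.univ, 𝔠.kerAct (c t) (x t) ∈ 𝔠.chains :=
    fun t _ => kerAct_mem_chains _ (hx t).1.mem_chains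
  obtain ⟨hH, hHK, hHδ⟩ := IsSlicePrimitive.sum Finset.univ fun t _ => (hh t).kerAct (c t)
  refine ⟨_, hH, hHK, ?_⟩
  rwa [slice_eq_of_coord_eq hb (Submodule.sum_mem _ hxc) hy.mem_chains] at hHδ
  rw [coord_sum _ hxc, ← hc]
  exact Finset.sum_congr rfl fun t _ => coord_kerAct _ (hx t).1.mem_chains

variable (𝔠) in
theorem exists_forall_hasSlicePrimitives [Group.FG Γ] [IsNoetherianRing R] :
    ∃ K δ, 0 < δ ∧ ∀ p, 𝔠.HasSlicePrimitives K δ (𝔠.act p) := by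
  have := 𝔠.finiteOrbits
  obtain ⟨K, δ, hδ, H⟩ := exists_uniform_bounds
    (Q := fun s : MulAction.orbitRel.Quotient Γ P => fun K δ =>
      𝔠.HasSlicePrimitives K δ (𝔠.act s.out))
    (fun _ _ _ _ _ hK hδ => HasSlicePrimitives.mono hK hδ) fun s => 𝔠.exists_hasSlicePrimitives _
  refine ⟨K, δ, hδ, fun p => ?_⟩
  obtain ⟨γ, hγ⟩ : ∃ γ : Γ, γ • (Quotient.mk'' p : MulAction.orbitRel.Quotient Γ P).out = p :=
    MulAction.mem_orbit_iff.1 <| Quotient.exact' <|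
      (Quotient.out_eq' (Quotient.mk'' p : MulAction.orbitRel.Quotient Γ P)).symm
  have := (H (Quotient.mk'' p)).shift γ
  rwa [← 𝔠.act_smul, hγ] at this

/-! ### Limits of boundaries are boundaries -/

variable (𝔠) in
def levelsAbove (x : P → R) (μ : ℝ) : Set ℝ := 𝔠.act '' {p | x p ≠ 0 ∧ μ < 𝔠.act p}

lemma exists_levelsAbove_ssubset {K δ : ℝ} (H : ∀ p, 𝔠.HasSlicePrimitives K δ (𝔠.act p)) (hδ : 0 < δ)
    {x : P → R} (hx : 𝔠.IsApproxBoundary x) {ν : ℝ} (hxν : x ∈ 𝔠.filtration ν)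
    (htop : ∃ p, x p ≠ 0 ∧ ν - δ < 𝔠.act p) :
    ∃ h ∈ 𝔠.chains, h ∈ 𝔠.filtration (ν + K) ∧ x - floerBdry 𝔠.bnd h ∈ 𝔠.filtration ν ∧
      𝔠.levelsAbove (x - floerBdry 𝔠.bnd h) (ν - δ) ⊂ 𝔠.levelsAbove x (ν - δ) := by
  obtain ⟨p, hp, hpδ, hxp⟩ := exists_top_level hx.mem_chains htop
  obtain ⟨h, hh, hhK, hhδ⟩ := H p x hx hxp
  have hpν : 𝔠.act p ≤ ν := hxν hp
  have hwindow : ∀ q, ν - δ < 𝔠.act q →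
      (x - floerBdry 𝔠.bnd h) q = if 𝔠.act q = 𝔠.act p then 0 else x q := fun q hq => by
    rw [← sub_slice_apply, Pi.sub_apply, Pi.sub_apply,
      sub_mem_filtration.1 hhδ q (by linarith)]
  refine ⟨h, hh, filtration_mono (by linarith) hhK, fun q hq => ?_, ?_⟩
  · rcases le_or_gt (𝔠.act q) (ν - δ) with hq' | hq'
    · exact hq'.trans (by linarith)
    · replace hq : (x - floerBdry 𝔠.bnd h) q ≠ 0 := hq
      rw [hwindow q hq'] at hq
      split_ifs at hq
      exacts [(hq rfl).elim, hxν hq]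
  · refine Set.ssubset_iff_exists.2 ⟨?_, 𝔠.act p, ⟨p, ⟨hp, hpδ⟩, rfl⟩, ?_⟩
    · rintro _ ⟨q, ⟨hq, hqδ⟩, rfl⟩
      rw [hwindow q hqδ] at hq
      split_ifs at hq
      exacts [(hq rfl).elim, ⟨q, ⟨hq, hqδ⟩, rfl⟩]
    · rintro ⟨q, ⟨hq, hqδ⟩, hqp⟩
      rw [hwindow q hqδ, if_pos hqp] at hq
      exact hq rfl

lemma exists_sub_floerBdry_mem_filtration {K δ : ℝ}
    (H : ∀ p, 𝔠.HasSlicePrimitives K δ (𝔠.act p))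
    (hδ : 0 < δ) {x : P → R} (hx : 𝔠.IsApproxBoundary x) {ν : ℝ} (hxν : x ∈ 𝔠.filtration ν) :
    ∃ h ∈ 𝔠.chains, h ∈ 𝔠.filtration (ν + K) ∧ x - floerBdry 𝔠.bnd h ∈ 𝔠.filtration (ν - δ) := by
  induction hn : (𝔠.levelsAbove x (ν - δ)).ncard using Nat.strong_induction_on generalizing x with
  | _ n ih =>
  by_cases htop : ∃ p, x p ≠ 0 ∧ ν - δ < 𝔠.act p
  · obtain ⟨h₁, hh₁, hh₁K, hx₁ν, hlt⟩ := exists_levelsAbove_ssubset H hδ hx hxν htop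
    obtain ⟨h₂, hh₂, hh₂K, hx₂⟩ := ih _ (hn ▸ Set.ncard_lt_ncard hlt
      ((hx.mem_chains (ν - δ)).image _)) (hx.sub_floerBdry hh₁) hx₁ν rfl
    refine ⟨h₁ + h₂, add_mem hh₁ hh₂, add_mem hh₁K hh₂K, ?_⟩
    rwa [floerBdry_add hh₁ hh₂, ← sub_sub]
  · push Not at htop
    refine ⟨0, zero_mem _, zero_mem _, ?_⟩
    rw [floerBdry_zero, sub_zero]
    exact fun p hp => htop p hp

lemma exists_primitive_seq {K δ : ℝ} (H : ∀ p, 𝔠.HasSlicePrimitives K δ (𝔠.act p)) (hδ : 0 < δ)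
    {x : P → R} (hx : 𝔠.IsApproxBoundary x) {ν : ℝ} (hxν : x ∈ 𝔠.filtration ν) :
    ∃ S : ℕ → P → R, ∀ n : ℕ, S n ∈ 𝔠.chains ∧
      x - floerBdry 𝔠.bnd (S n) ∈ 𝔠.filtration (ν - n * δ) ∧
      S (n + 1) - S n ∈ 𝔠.filtration (ν + K - n * δ) := by
  choose! step hstep using fun μ (y : P → R) (hy : 𝔠.IsApproxBoundary y)
    (hyμ : y ∈ 𝔠.filtration μ) => exists_sub_floerBdry_mem_filtration H hδ hy hyμ
  let S : ℕ → P → R := fun n =>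
    Nat.rec 0 (fun n s => s + step (ν - n * δ) (x - floerBdry 𝔠.bnd s)) n
  have hS : ∀ n, S n ∈ 𝔠.chains ∧ x - floerBdry 𝔠.bnd (S n) ∈ 𝔠.filtration (ν - n * δ) := by
    intro n
    induction n with
    | zero => simpa [S, floerBdry_zero] using hxν
    | succ n ih =>
      obtain ⟨hc, -, hlow⟩ := hstep _ _ (hx.sub_floerBdry ih.1) ih.2
      refine ⟨add_mem ih.1 hc, ?_⟩
      rw [show S (n + 1) = S n + step _ _ from rfl, floerBdry_add ih.1 hc, ← sub_sub]
      convert hlow using 2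
      push_cast
      ring
  refine ⟨S, fun n => ⟨(hS n).1, (hS n).2, ?_⟩⟩
  rw [show S (n + 1) - S n = step _ _ from add_sub_cancel_left _ _]
  simpa only [sub_add_eq_add_sub] using (hstep _ _ (hx.sub_floerBdry (hS n).1) (hS n).2).2.1

lemma exists_filtration_limit {S : ℕ → P → R} {a δ : ℝ} (hδ : 0 < δ)
    (hS : ∀ n : ℕ, S (n + 1) - S n ∈ 𝔠.filtration (a - n * δ)) :
    ∃ H, ∀ n : ℕ, H - S n ∈ 𝔠.filtration (a - n * δ) := by
  have hconst : ∀ p (m n : ℕ), m ≤ n → a - m * δ < 𝔠.act p → S n p = S m p := by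
    intro p m n hmn hm
    induction n, hmn using Nat.le_induction with
    | base => rfl
    | succ n hmn ih =>
      rw [← ih]
      refine sub_mem_filtration.1 (hS n) p (lt_of_le_of_lt ?_ hm)
      have : (m : ℝ) ≤ n := by exact_mod_cast hmn
      nlinarith
  choose N hN using fun p => exists_nat_gt ((a - 𝔠.act p) / δ)
  refine ⟨fun p => S (N p) p, fun n => sub_mem_filtration.2 fun p hp => ?_⟩
  have hNp : a - N p * δ < 𝔠.act p := by
    linarith [(div_lt_iff₀ hδ).1 (hN p)]
  rcases le_total n (N p) with h | h
  · exact hconst p n (N p) h hp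
  · exact (hconst p (N p) n h hNp).symm

theorem IsApproxBoundary.exists_eq_floerBdry [Group.FG Γ] [IsNoetherianRing R] {x : P → R}
    (hx : 𝔠.IsApproxBoundary x) : ∃ H ∈ 𝔠.chains, floerBdry 𝔠.bnd H = x := by
  obtain ⟨K, δ, hδ, hprim⟩ := 𝔠.exists_forall_hasSlicePrimitives
  obtain ⟨ν, hν⟩ := exists_mem_filtration hx.mem_chains
  obtain ⟨S, hS⟩ := exists_primitive_seq hprim hδ hx hν
  obtain ⟨H, hH⟩ := exists_filtration_limit hδ fun n => (hS n).2.2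
  have hlow : ∀ μ, ∃ n : ℕ, ν + |K| - n * δ ≤ μ := fun μ => by
    obtain ⟨n, hn⟩ := exists_nat_gt ((ν + |K| - μ) / δ)
    exact ⟨n, by linarith [(div_lt_iff₀ hδ).1 hn]⟩
  have hHS : ∀ n : ℕ, H - S n ∈ 𝔠.filtration (ν + |K| - n * δ) := fun n =>
    filtration_mono (by linarith [le_abs_self K]) (hH n)
  have hHc : H ∈ 𝔠.chains := mem_chains_of_forall_sub_mem_filtration fun C =>
    let ⟨n, hn⟩ := hlow C
    ⟨S n, (hS n).1, filtration_mono hn (hHS n)⟩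
  refine ⟨H, hHc, (sub_eq_zero.1 (eq_zero_of_forall_mem_filtration (𝔠 := 𝔠) fun μ => ?_)).symm⟩
  obtain ⟨n, hn⟩ := hlow μ
  rw [← sub_sub_sub_cancel_right x _ (floerBdry 𝔠.bnd (S n)), ← floerBdry_sub hHc (hS n).1]
  refine filtration_mono hn (sub_mem ?_ (floerBdry_mem_filtration (hHS n)))
  exact filtration_mono (by linarith [abs_nonneg K]) (hS n).2.1

end FloerComplex

open FloerComplex

theorem spectral_number_finite_general [Group.FG Γ] [IsNoetherianRing R]
    (𝔠 : FloerComplex R Γ P) (c₀ : P → R)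
    (hnonzero : ¬ ∃ h : P → R, IsFloerChain 𝔠.act h ∧ floerBdry 𝔠.bnd h = c₀) :
    ⊥ < sInf (repLevels 𝔠 c₀) := by
  refine bot_lt_iff_ne_bot.2 fun hbot => hnonzero ?_
  refine IsApproxBoundary.exists_eq_floerBdry (𝔠 := 𝔠) fun μ => ?_
  obtain ⟨_, ⟨c, -, -, ⟨h, hh, hhc⟩, rfl⟩, hlt⟩ :=
    sInf_lt_iff.1 (hbot ▸ EReal.bot_lt_coe μ)
  refine ⟨-h, neg_mem hh, ?_⟩
  rw [floerBdry_neg, hhc, sub_neg_eq_add, add_sub_cancel]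
  exact floerLevel_le_iff.1 hlt.le

/-- over a Noetherian ring, the spectral number
`ρ(a) = inf {ℓ(c) : [c] = a}` of any nonzero homology class `a = [c₀]` is
finite, i.e. `ρ(a) > -∞`. -/
theorem spectral_number_finite [Group.FG Γ] [IsNoetherianRing R]
    (𝔠 : FloerComplex R Γ P) (c₀ : P → R)
    (hchain : IsFloerChain 𝔠.act c₀) (hcycle : floerBdry 𝔠.bnd c₀ = 0)
    (hnonzero : ¬ ∃ h : P → R, IsFloerChain 𝔠.act h ∧ floerBdry 𝔠.bnd h = c₀) :
    ⊥ < sInf (repLevels 𝔠 c₀) :=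
  spectral_number_finite_general 𝔠 c₀ hnonzero
end
end
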